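/- arXiv:1112.0061 — 11 statements merged into one kernel-verified Lean document; each statement's English description precedes it below -/
import Mathlib

section
/- The closure of the set of normalized Gaussian entropy-type vectors on n random variables is a convex subset of ℝ^(2^n−1). That is, let G_n be the set of all functions g from the nonempty subsets of {1,…,n} to ℝ for which there exist a positive integer T and a symmetric positive definite real matrix R indexed by {1,…,n}×{1,…,T} such that for every nonempty s ⊆ {1,…,n}, g(s) = (1/T)·log det R_s, where R_s is the principal submatrix of R keeping all rows and columns (i,t) with i ∈ s. Then the topological closure of G_n (in the product topology on functions from nonempty subsets of {1,…,n} to ℝ) is convex. -/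
open Matrix

section Aux

theorem posDef_submatrix_of_injective {m n : Type*} [Fintype m] [Fintype n] [DecidableEq n]
    {M : Matrix n n ℝ} (hM : M.PosDef) {e : m → n} (he : Function.Injective e) :
    (M.submatrix e e).PosDef := by
  classical
  refine PosDef.of_dotProduct_mulVec_pos (hM.1.submatrix e) (fun x hx => ?_)
  set P : Matrix n m ℝ := Matrix.submatrix (1 : Matrix n n ℝ) id e with hP
  have hMe : M.submatrix e e = Pᴴ * M * P := by
    rw [hP]
    rw [(by simp : M = 1 * M * 1), submatrix_mul (he₂ := Function.bijective_id),
      submatrix_mul (he₂ := Function.bijective_id), submatrix_id_id]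
    simp [conjTranspose_submatrix, conjTranspose_one]
  have hy : P *ᵥ x ≠ 0 := by
    obtain ⟨i₀, hi₀⟩ := Function.ne_iff.mp hx
    intro h0
    apply hi₀
    have := congrFun h0 (e i₀)
    simp only [mulVec, dotProduct, hP, submatrix_apply, id_eq, one_apply, Pi.zero_apply] at this
    rw [Finset.sum_eq_single i₀ (fun b _ hb => by
      rw [if_neg (fun h => hb (he h.symm)), zero_mul]) (by simp)] at this
    simpa using this
  have := hM.dotProduct_mulVec_pos hy
  rw [hMe]
  simpa only [star_mulVec, dotProduct_mulVec, vecMul_vecMul, Matrix.mul_assoc] using this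

theorem posDef_fromBlocks_diag {m n : Type*} [Fintype m] [Fintype n]
    {A : Matrix m m ℝ} {D : Matrix n n ℝ} (hA : A.PosDef) (hD : D.PosDef) :
    (fromBlocks A 0 0 D).PosDef := by
  classical
  refine PosDef.of_dotProduct_mulVec_pos ?_ (fun x hx => ?_)
  · rw [IsHermitian, fromBlocks_conjTranspose, hA.1, hD.1]
    simp
  · have hform : star x ⬝ᵥ (fromBlocks A 0 0 D *ᵥ x)
        = star (x ∘ Sum.inl) ⬝ᵥ (A *ᵥ (x ∘ Sum.inl))
          + star (x ∘ Sum.inr) ⬝ᵥ (D *ᵥ (x ∘ Sum.inr)) := by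
      rw [fromBlocks_mulVec, ← Sum.elim_comp_inl_inr (star x)]
      simp only [zero_mulVec, add_zero, zero_add]
      rw [sumElim_dotProduct_sumElim]
      rfl
    rw [hform]
    rcases (by
      by_contra h
      push_neg at h
      apply hx
      ext (i | i)
      · exact congrFun h.1 i
      · exact congrFun h.2 i : x ∘ Sum.inl ≠ 0 ∨ x ∘ Sum.inr ≠ 0) with h | h
    · exact add_pos_of_pos_of_nonneg (hA.dotProduct_mulVec_pos h) (hD.posSemidef.dotProduct_mulVec_nonneg _)
    · exact add_pos_of_nonneg_of_pos (hA.posSemidef.dotProduct_mulVec_nonneg _) (hD.dotProduct_mulVec_pos h)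

theorem icc_subset_of_midpoint_closed {A : Set ℝ} (hA : IsClosed A) (h0 : (0:ℝ) ∈ A)
    (h1 : (1:ℝ) ∈ A) (hmid : ∀ a ∈ A, ∀ b ∈ A, (a + b) / 2 ∈ A) :
    Set.Icc (0:ℝ) 1 ⊆ A := by
  have hdy : ∀ k : ℕ, ∀ i : ℕ, i ≤ 2 ^ k → ((i : ℝ) / 2 ^ k) ∈ A := by
    intro k
    induction k with
    | zero =>
      intro i hi
      interval_cases i <;> simpa
    | succ k ih =>
      intro i hi
      have ha : min i (2 ^ k) ≤ 2 ^ k := min_le_right _ _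
      have hb : i - min i (2 ^ k) ≤ 2 ^ k := by omega
      have hmem := hmid _ (ih _ ha) _ (ih _ hb)
      have heq : (((min i (2 ^ k) : ℕ) : ℝ) / 2 ^ k + ((i - min i (2 ^ k) : ℕ) : ℝ) / 2 ^ k) / 2
          = (i : ℝ) / 2 ^ (k + 1) := by
        rw [Nat.cast_sub (min_le_left i (2 ^ k)), pow_succ]
        have h2k : (2:ℝ) ^ k ≠ 0 := by positivity
        field_simp
        try ring
      rwa [heq] at hmem
  intro θ hθ
  obtain ⟨hθ0, hθ1⟩ := hθ
  have h2 : Filter.Tendsto (fun k : ℕ => (1:ℝ) / 2 ^ k) Filter.atTop (nhds 0) := by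
    have := tendsto_pow_atTop_nhds_zero_of_lt_one (r := (1:ℝ)/2) (by norm_num) (by norm_num)
    exact this.congr (fun k => by rw [div_pow, one_pow])
  have htend : Filter.Tendsto (fun k : ℕ => (⌊θ * 2 ^ k⌋₊ : ℝ) / 2 ^ k) Filter.atTop (nhds θ) := by
    have hsq : Filter.Tendsto (fun k : ℕ => (θ * 2 ^ k - ⌊θ * 2 ^ k⌋₊) / 2 ^ k)
        Filter.atTop (nhds 0) := by
      apply squeeze_zero (fun k => ?_) (fun k => ?_) h2
      · have h1' : (⌊θ * 2 ^ k⌋₊ : ℝ) ≤ θ * 2 ^ k := Nat.floor_le (by positivity)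
        exact div_nonneg (sub_nonneg.mpr h1') (by positivity)
      · apply div_le_div_of_nonneg_right ?_ (by positivity)
        have := Nat.lt_floor_add_one (θ * 2 ^ k)
        linarith
    have := Filter.Tendsto.sub (tendsto_const_nhds (x := θ) (f := Filter.atTop (α := ℕ))) hsq
    rw [sub_zero] at this
    apply this.congr
    intro k
    have h2k : (2:ℝ) ^ k ≠ 0 := by positivity
    field_simp
    ring
  exact hA.mem_of_tendsto htend (Filter.Eventually.of_forall fun k => hdy k _ (by
    have h1' : θ * 2 ^ k ≤ 2 ^ k := by nlinarith [pow_pos (by norm_num : (0:ℝ) < 2) k]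
    exact Nat.floor_le_of_le (by exact_mod_cast h1')))

theorem convex_closure_of_mid {E : Type*} [AddCommGroup E] [Module ℝ E] [TopologicalSpace E]
    [IsTopologicalAddGroup E] [ContinuousSMul ℝ E] {S : Set E}
    (hmid : ∀ x ∈ S, ∀ y ∈ S, (2⁻¹:ℝ) • (x + y) ∈ S) : Convex ℝ (closure S) := by
  have hmidC : ∀ x ∈ closure S, ∀ y ∈ closure S, (2⁻¹:ℝ) • (x + y) ∈ closure S := by
    have hc : Continuous (fun p : E × E => (2⁻¹:ℝ) • (p.1 + p.2)) := by fun_prop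
    have hmap : Set.MapsTo (fun p : E × E => (2⁻¹:ℝ) • (p.1 + p.2)) (S ×ˢ S) S :=
      fun p hp => hmid _ hp.1 _ hp.2
    have := hmap.closure hc
    rw [closure_prod_eq] at this
    exact fun x hx y hy => this (Set.mk_mem_prod hx hy)
  intro x hx y hy a b ha hb hab
  set A : Set ℝ := {θ : ℝ | θ • x + (1 - θ) • y ∈ closure S} with hA
  have hAclosed : IsClosed A := by
    have : Continuous (fun θ : ℝ => θ • x + (1 - θ) • y) := by fun_prop
    exact IsClosed.preimage this isClosed_closure
  have h0A : (0:ℝ) ∈ A := by simpa [hA] using hy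
  have h1A : (1:ℝ) ∈ A := by simpa [hA] using hx
  have hmidA : ∀ c ∈ A, ∀ d ∈ A, (c + d) / 2 ∈ A := by
    intro c hc d hd
    have := hmidC _ hc _ hd
    have heq : (2⁻¹:ℝ) • ((c • x + (1 - c) • y) + (d • x + (1 - d) • y))
        = ((c + d) / 2) • x + (1 - (c + d) / 2) • y := by
      match_scalars <;> ring
    rwa [heq] at this
  have := icc_subset_of_midpoint_closed hAclosed h0A h1A hmidA ⟨ha, by linarith⟩
  have hb' : b = 1 - a := by linarith
  rw [hb']
  exact this

variable {n T T' : ℕ}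

/-- The reindexing equivalence splitting `Fin (T+T')` time indices. -/
def splitEquiv (n T T' : ℕ) : Fin n × Fin (T + T') ≃ (Fin n × Fin T) ⊕ (Fin n × Fin T') :=
  ((Equiv.refl (Fin n)).prodCongr finSumFinEquiv.symm).trans
    (Equiv.prodSumDistrib (Fin n) (Fin T) (Fin T'))

theorem splitEquiv_fst (p : Fin n × Fin (T + T')) :
    Sum.elim (fun q : Fin n × Fin T => q.1) (fun q : Fin n × Fin T' => q.1)
      (splitEquiv n T T' p) = p.1 := by
  obtain ⟨i, u⟩ := p
  rcases h : finSumFinEquiv.symm u with t | t <;>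
    simp [splitEquiv, Equiv.prodSumDistrib, Equiv.sumProdDistrib, Equiv.prodCongr, h]

theorem det_combine (R : Matrix (Fin n × Fin T) (Fin n × Fin T) ℝ)
    (R' : Matrix (Fin n × Fin T') (Fin n × Fin T') ℝ) (s : Finset (Fin n)) :
    ((((fromBlocks R 0 0 R').submatrix (splitEquiv n T T') (splitEquiv n T T')).submatrix
        (fun p : {p : Fin n × Fin (T + T') // p.1 ∈ s} => (p : Fin n × Fin (T + T')))
        (fun p : {p : Fin n × Fin (T + T') // p.1 ∈ s} => (p : Fin n × Fin (T + T')))).det)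
    = (R.submatrix
          (fun p : {p : Fin n × Fin T // p.1 ∈ s} => (p : Fin n × Fin T))
          (fun p : {p : Fin n × Fin T // p.1 ∈ s} => (p : Fin n × Fin T))).det *
      (R'.submatrix
          (fun p : {p : Fin n × Fin T' // p.1 ∈ s} => (p : Fin n × Fin T'))
          (fun p : {p : Fin n × Fin T' // p.1 ∈ s} => (p : Fin n × Fin T'))).det := by
  classical
  set φ := splitEquiv n T T' with hφ
  have hpred : ∀ p : Fin n × Fin (T + T'), p.1 ∈ s ↔
      Sum.elim (fun q : Fin n × Fin T => q.1 ∈ s) (fun q : Fin n × Fin T' => q.1 ∈ s) (φ p) := by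
    intro p
    have := splitEquiv_fst (T := T) (T' := T') p
    rcases h : φ p with a | a <;> rw [h] at this <;> simp_all
  set ψ := φ.subtypeEquiv hpred with hψ
  set σ : {q : (Fin n × Fin T) ⊕ (Fin n × Fin T') //
      Sum.elim (fun q : Fin n × Fin T => q.1 ∈ s) (fun q : Fin n × Fin T' => q.1 ∈ s) q}
      ≃ {a : Fin n × Fin T // a.1 ∈ s} ⊕ {b : Fin n × Fin T' // b.1 ∈ s} :=
    Equiv.subtypeSum.trans (Equiv.sumCongr
      (Equiv.subtypeEquivRight fun _ => Iff.rfl) (Equiv.subtypeEquivRight fun _ => Iff.rfl))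
    with hσ
  set χ := ψ.trans σ with hχ
  have hmap : ∀ q : {q : (Fin n × Fin T) ⊕ (Fin n × Fin T') //
      Sum.elim (fun q : Fin n × Fin T => q.1 ∈ s) (fun q : Fin n × Fin T' => q.1 ∈ s) q},
      Sum.map Subtype.val Subtype.val (σ q) = q.val := by
    rintro ⟨a | b, h⟩ <;> rfl
  have hmat : (((fromBlocks R 0 0 R').submatrix φ φ).submatrix
        (fun p : {p : Fin n × Fin (T + T') // p.1 ∈ s} => (p : Fin n × Fin (T + T')))
        (fun p : {p : Fin n × Fin (T + T') // p.1 ∈ s} => (p : Fin n × Fin (T + T'))))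
      = (fromBlocks
          (R.submatrix (fun p : {p : Fin n × Fin T // p.1 ∈ s} => (p : Fin n × Fin T))
            (fun p : {p : Fin n × Fin T // p.1 ∈ s} => (p : Fin n × Fin T)))
          0 0
          (R'.submatrix (fun p : {p : Fin n × Fin T' // p.1 ∈ s} => (p : Fin n × Fin T'))
            (fun p : {p : Fin n × Fin T' // p.1 ∈ s} => (p : Fin n × Fin T')))).submatrix χ χ := by
    ext p q
    simp only [submatrix_apply]
    have h1 : Sum.map Subtype.val Subtype.val (χ p) = φ p.val := by
      rw [hχ, Equiv.trans_apply, hmap]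
      rfl
    have h2 : Sum.map Subtype.val Subtype.val (χ q) = φ q.val := by
      rw [hχ, Equiv.trans_apply, hmap]
      rfl
    rw [← h1, ← h2]
    rcases χ p with a | a <;> rcases χ q with b | b <;> rfl
  rw [hmat]
  rw [det_submatrix_equiv_self χ]
  rw [det_fromBlocks_zero₂₁]

end Aux

/-- `g` is witnessed by a symmetric positive definite matrix at block length `T`. -/
def Wit (n T : ℕ) (g : {s : Finset (Fin n) // s.Nonempty} → ℝ) : Prop :=
  ∃ R : Matrix (Fin n × Fin T) (Fin n × Fin T) ℝ, R.IsSymm ∧ R.PosDef ∧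
    ∀ s : {s : Finset (Fin n) // s.Nonempty},
      g s = (1 / (T : ℝ)) * Real.log
        (R.submatrix
          (fun p : {p : Fin n × Fin T // p.1 ∈ s.1} => (p : Fin n × Fin T))
          (fun p : {p : Fin n × Fin T // p.1 ∈ s.1} => (p : Fin n × Fin T))).det

theorem wit_comb {n T T' : ℕ} (hT : 0 < T) (hT' : 0 < T')
    {g g' : {s : Finset (Fin n) // s.Nonempty} → ℝ}
    (hg : Wit n T g) (hg' : Wit n T' g') :
    Wit n (T + T') (fun s => ((T : ℝ) * g s + (T' : ℝ) * g' s) / ((T : ℝ) + (T' : ℝ))) := by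
  classical
  obtain ⟨R, hRs, hRp, hRv⟩ := hg
  obtain ⟨R', hR's, hR'p, hR'v⟩ := hg'
  refine ⟨(fromBlocks R 0 0 R').submatrix (splitEquiv n T T') (splitEquiv n T T'), ?_, ?_, ?_⟩
  · apply Matrix.IsSymm.submatrix
    rw [Matrix.IsSymm, fromBlocks_transpose, hRs.eq, hR's.eq]
    simp
  · exact posDef_submatrix_of_injective (posDef_fromBlocks_diag hRp hR'p)
      (Equiv.injective _)
  · intro s
    have hdet := det_combine (n := n) R R' s.1
    have hRsub : (R.submatrix
          (fun p : {p : Fin n × Fin T // p.1 ∈ s.1} => (p : Fin n × Fin T))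
          (fun p : {p : Fin n × Fin T // p.1 ∈ s.1} => (p : Fin n × Fin T))).PosDef :=
      posDef_submatrix_of_injective hRp Subtype.val_injective
    have hR'sub : (R'.submatrix
          (fun p : {p : Fin n × Fin T' // p.1 ∈ s.1} => (p : Fin n × Fin T'))
          (fun p : {p : Fin n × Fin T' // p.1 ∈ s.1} => (p : Fin n × Fin T'))).PosDef :=
      posDef_submatrix_of_injective hR'p Subtype.val_injective
    rw [hdet, Real.log_mul hRsub.det_pos.ne' hR'sub.det_pos.ne']
    have hgs := hRv s
    have hg's := hR'v s
    have hTne : (T : ℝ) ≠ 0 := Nat.cast_ne_zero.mpr hT.ne'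
    have hT'ne : (T' : ℝ) ≠ 0 := Nat.cast_ne_zero.mpr hT'.ne'
    have hlog : Real.log (R.submatrix
          (fun p : {p : Fin n × Fin T // p.1 ∈ s.1} => (p : Fin n × Fin T))
          (fun p : {p : Fin n × Fin T // p.1 ∈ s.1} => (p : Fin n × Fin T))).det
        = (T : ℝ) * g s := by
      rw [hgs]; field_simp
    have hlog' : Real.log (R'.submatrix
          (fun p : {p : Fin n × Fin T' // p.1 ∈ s.1} => (p : Fin n × Fin T'))
          (fun p : {p : Fin n × Fin T' // p.1 ∈ s.1} => (p : Fin n × Fin T'))).det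
        = (T' : ℝ) * g' s := by
      rw [hg's]; field_simp
    rw [hlog, hlog']
    have : ((T + T' : ℕ) : ℝ) = (T : ℝ) + (T' : ℝ) := by push_cast; ring
    rw [this]
    have hsum : (T : ℝ) + (T' : ℝ) ≠ 0 := by positivity
    field_simp

theorem wit_rep {n T : ℕ} (hT : 0 < T) {g : {s : Finset (Fin n) // s.Nonempty} → ℝ}
    (hg : Wit n T g) : ∀ k : ℕ, Wit n ((k + 1) * T) g := by
  intro k
  induction k with
  | zero => simpa using hg
  | succ k ih =>
    have hkT : 0 < (k + 1) * T := Nat.mul_pos (Nat.succ_pos k) hT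
    have hcomb := wit_comb hkT hT ih hg
    have hfun : (fun s => (((k + 1) * T : ℕ) * g s + (T : ℝ) * g s)
        / ((((k + 1) * T : ℕ) : ℝ) + (T : ℝ))) = g := by
      funext s
      have h1 : (0:ℝ) < (((k + 1) * T : ℕ) : ℝ) := by exact_mod_cast hkT
      have h2 : (0:ℝ) < (T : ℝ) := by exact_mod_cast hT
      field_simp
    rw [hfun] at hcomb
    rwa [show (k + 1) * T + T = (k + 1 + 1) * T by ring] at hcomb

theorem wit_mid {n T T' : ℕ} (hT : 0 < T) (hT' : 0 < T')
    {g g' : {s : Finset (Fin n) // s.Nonempty} → ℝ}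
    (hg : Wit n T g) (hg' : Wit n T' g') :
    ∃ T'' : ℕ, 0 < T'' ∧ Wit n T'' ((2⁻¹ : ℝ) • (g + g')) := by
  have h1 : Wit n (T' * T) g := by
    have := wit_rep hT hg (T' - 1)
    rwa [Nat.sub_add_cancel hT'] at this
  have h2 : Wit n (T * T') g' := by
    have := wit_rep hT' hg' (T - 1)
    rwa [Nat.sub_add_cancel hT] at this
  have hc : 0 < T' * T := Nat.mul_pos hT' hT
  have hc' : 0 < T * T' := Nat.mul_pos hT hT'
  have hcomb := wit_comb hc hc' h1 h2
  refine ⟨T' * T + T * T', Nat.add_pos_left hc _, ?_⟩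
  have hfun : (fun s => (((T' * T : ℕ) : ℝ) * g s + ((T * T' : ℕ) : ℝ) * g' s)
      / (((T' * T : ℕ) : ℝ) + ((T * T' : ℕ) : ℝ))) = (2⁻¹ : ℝ) • (g + g') := by
    funext s
    have hcc : ((T' * T : ℕ) : ℝ) = ((T * T' : ℕ) : ℝ) := by push_cast; ring
    have hpos : (0:ℝ) < ((T * T' : ℕ) : ℝ) := by exact_mod_cast hc'
    simp only [Pi.smul_apply, Pi.add_apply, smul_eq_mul]
    rw [hcc]
    field_simp
    ring
  rwa [hfun] at hcomb

/-- The closure of the set of normalized Gaussian entropy vectors on `n` random variables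
(each of arbitrary vector length `T`) is convex. -/
theorem stmt_0 (n : ℕ) :
    Convex ℝ (closure {g : {s : Finset (Fin n) // s.Nonempty} → ℝ |
      ∃ T : ℕ, 0 < T ∧
        ∃ R : Matrix (Fin n × Fin T) (Fin n × Fin T) ℝ, R.IsSymm ∧ R.PosDef ∧
          ∀ s : {s : Finset (Fin n) // s.Nonempty},
            g s = (1 / (T : ℝ)) * Real.log
              (R.submatrix
                (fun p : {p : Fin n × Fin T // p.1 ∈ s.1} => (p : Fin n × Fin T))
                (fun p : {p : Fin n × Fin T // p.1 ∈ s.1} => (p : Fin n × Fin T))).det}) := by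
  apply convex_closure_of_mid
  intro x hx y hy
  obtain ⟨T, hT, hW⟩ := hx
  obtain ⟨T', hT', hW'⟩ := hy
  obtain ⟨T'', hT'', hWmid⟩ := wit_mid hT hT' hW hW'
  exact ⟨T'', hT'', hWmid⟩
end

section
/- (Ingleton inequality) Let V be a finite-dimensional vector space over a field K, let v_1,…,v_n be subspaces of V, and for each subset s ⊆ {1,…,n} let r(s) denote the dimension of the subspace spanned by the union of the v_i with i ∈ s (i.e., r(s) = dim(Σ_{i∈s} v_i), with r(∅)=0). Then for any subsets s₁, s₂, s₃, s₄ ⊆ {1,…,n}: r(s₁) + r(s₂) + r(s₁∪s₂∪s₃) + r(s₁∪s₂∪s₄) + r(s₃∪s₄) ≤ r(s₁∪s₂) + r(s₁∪s₃) + r(s₁∪s₄) + r(s₂∪s₃) + r(s₂∪s₄). -/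
set_option maxHeartbeats 1000000

open Module Submodule

lemma ingleton_subspaces (K : Type*) [Field K] (V : Type*) [AddCommGroup V] [Module K V]
    [FiniteDimensional K V] (A B C D : Submodule K V) :
    finrank K A + finrank K B + finrank K ↥(A ⊔ B ⊔ C) + finrank K ↥(A ⊔ B ⊔ D)
      + finrank K ↥(C ⊔ D) ≤
    finrank K ↥(A ⊔ B) + finrank K ↥(A ⊔ C) + finrank K ↥(A ⊔ D)
      + finrank K ↥(B ⊔ C) + finrank K ↥(B ⊔ D) := by
  set Z := A ⊓ B with hZ
  have h1 : finrank K ↥(A ⊔ B) + finrank K ↥Z = finrank K A + finrank K B :=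
    Submodule.finrank_sup_add_finrank_inf_eq A B
  -- Z bound against C + D
  have h2 := Submodule.finrank_sup_add_finrank_inf_eq (Z ⊔ C) (Z ⊔ D)
  have h2a : finrank K ↥(C ⊔ D) ≤ finrank K ↥((Z ⊔ C) ⊔ (Z ⊔ D)) :=
    Submodule.finrank_mono (sup_le (le_sup_of_le_left le_sup_right)
      (le_sup_of_le_right le_sup_right))
  have h2b : finrank K ↥Z ≤ finrank K ↥((Z ⊔ C) ⊓ (Z ⊔ D)) :=
    Submodule.finrank_mono (le_inf le_sup_left le_sup_left)
  -- (A+C) + (B+C) bound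
  have h3 := Submodule.finrank_sup_add_finrank_inf_eq (A ⊔ C) (B ⊔ C)
  have h3a : finrank K ↥(A ⊔ B ⊔ C) ≤ finrank K ↥((A ⊔ C) ⊔ (B ⊔ C)) :=
    Submodule.finrank_mono (by
      refine sup_le (sup_le ?_ ?_) ?_
      · exact le_sup_of_le_left le_sup_left
      · exact le_sup_of_le_right le_sup_left
      · exact le_sup_of_le_left le_sup_right)
  have h3b : finrank K ↥(Z ⊔ C) ≤ finrank K ↥((A ⊔ C) ⊓ (B ⊔ C)) :=
    Submodule.finrank_mono (sup_le
      (le_inf (le_sup_of_le_left inf_le_left) (le_sup_of_le_left inf_le_right))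
      (le_inf le_sup_right le_sup_right))
  -- (A+D) + (B+D) bound
  have h4 := Submodule.finrank_sup_add_finrank_inf_eq (A ⊔ D) (B ⊔ D)
  have h4a : finrank K ↥(A ⊔ B ⊔ D) ≤ finrank K ↥((A ⊔ D) ⊔ (B ⊔ D)) :=
    Submodule.finrank_mono (by
      refine sup_le (sup_le ?_ ?_) ?_
      · exact le_sup_of_le_left le_sup_left
      · exact le_sup_of_le_right le_sup_left
      · exact le_sup_of_le_left le_sup_right)
  have h4b : finrank K ↥(Z ⊔ D) ≤ finrank K ↥((A ⊔ D) ⊓ (B ⊔ D)) :=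
    Submodule.finrank_mono (sup_le
      (le_inf (le_sup_of_le_left inf_le_left) (le_sup_of_le_left inf_le_right))
      (le_inf le_sup_right le_sup_right))
  omega

/-- Ingleton's inequality for the rank function of a family of subspaces. -/
theorem stmt_2 (K : Type*) [Field K] (V : Type*) [AddCommGroup V] [Module K V]
    [FiniteDimensional K V] (n : ℕ) (v : Fin n → Submodule K V)
    (r : Finset (Fin n) → ℕ)
    (hr : ∀ s : Finset (Fin n), r s = Module.finrank K ↥(⨆ i ∈ s, v i))
    (s₁ s₂ s₃ s₄ : Finset (Fin n)) :
    r s₁ + r s₂ + r (s₁ ∪ s₂ ∪ s₃) + r (s₁ ∪ s₂ ∪ s₄) + r (s₃ ∪ s₄) ≤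
      r (s₁ ∪ s₂) + r (s₁ ∪ s₃) + r (s₁ ∪ s₄) + r (s₂ ∪ s₃) + r (s₂ ∪ s₄) := by
  have key : ∀ s t : Finset (Fin n),
      (⨆ i ∈ s ∪ t, v i) = (⨆ i ∈ s, v i) ⊔ (⨆ i ∈ t, v i) := fun _ _ =>
    Finset.iSup_union
  have fr : ∀ M N : Submodule K V, M = N →
      finrank K ↥M = finrank K ↥N := fun M N h => by rw [h]
  set A := ⨆ i ∈ s₁, v i with hA
  set B := ⨆ i ∈ s₂, v i with hB
  set C := ⨆ i ∈ s₃, v i with hC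
  set D := ⨆ i ∈ s₄, v i with hD
  have e12 : (⨆ i ∈ s₁ ∪ s₂, v i) = A ⊔ B := key s₁ s₂
  have e13 : (⨆ i ∈ s₁ ∪ s₃, v i) = A ⊔ C := key s₁ s₃
  have e14 : (⨆ i ∈ s₁ ∪ s₄, v i) = A ⊔ D := key s₁ s₄
  have e23 : (⨆ i ∈ s₂ ∪ s₃, v i) = B ⊔ C := key s₂ s₃
  have e24 : (⨆ i ∈ s₂ ∪ s₄, v i) = B ⊔ D := key s₂ s₄
  have e34 : (⨆ i ∈ s₃ ∪ s₄, v i) = C ⊔ D := key s₃ s₄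
  have e123 : (⨆ i ∈ s₁ ∪ s₂ ∪ s₃, v i) = A ⊔ B ⊔ C := by
    rw [key (s₁ ∪ s₂) s₃, e12]
  have e124 : (⨆ i ∈ s₁ ∪ s₂ ∪ s₄, v i) = A ⊔ B ⊔ D := by
    rw [key (s₁ ∪ s₂) s₄, e12]
  rw [hr s₁, hr s₂, hr (s₁ ∪ s₂ ∪ s₃), hr (s₁ ∪ s₂ ∪ s₄), hr (s₃ ∪ s₄),
    hr (s₁ ∪ s₂), hr (s₁ ∪ s₃), hr (s₁ ∪ s₄), hr (s₂ ∪ s₃), hr (s₂ ∪ s₄),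
    fr _ _ e123, fr _ _ e124, fr _ _ e34, fr _ _ e12, fr _ _ e13, fr _ _ e14,
    fr _ _ e23, fr _ _ e24]
  exact ingleton_subspaces K V A B C D
end

section
/- Gaussian random variables can violate the Ingleton bound: let R be the 4×4 real matrix with rows (1, 1/4, 1/2, 1/2), (1/4, 1, 1/2, 1/2), (1/2, 1/2, 1, 0), (1/2, 1/2, 0, 1). Then R is symmetric positive definite, and its principal minors satisfy m₁·m₂·m₁₂₃·m₁₂₄·m₃₄ > m₁₂·m₁₃·m₁₄·m₂₃·m₂₄, where m_s denotes the determinant of the principal submatrix of R with rows and columns indexed by s ⊆ {1,2,3,4}. Equivalently, the Gaussian entropy-type vector g(s) = log m_s satisfies the reversed (violated) Ingleton inequality g₁ + g₂ + g₁₂₃ + g₁₂₄ + g₃₄ − g₁₂ − g₁₃ − g₁₄ − g₂₃ − g₂₄ > 0. -/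
open Matrix

lemma minor_val (R : Matrix (Fin 4) (Fin 4) ℝ) (s : Finset (Fin 4)) {k : ℕ}
    (f : Fin k → Fin 4) (hf : ∀ i, f i ∈ s)
    (hb : Function.Bijective (fun i => (⟨f i, hf i⟩ : {x // x ∈ s}))) :
    (R.submatrix (fun i : {x // x ∈ s} => (i : Fin 4))
                 (fun i : {x // x ∈ s} => (i : Fin 4))).det
    = (R.submatrix f f).det := by
  rw [← Matrix.det_submatrix_equiv_self (Equiv.ofBijective _ hb)]
  rfl

/-- The specific 4×4 Gaussian covariance matrix (ε = 1/4, a = 1/2) is symmetric positive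
definite and its principal minors violate the Ingleton inequality, both in product form and
in the (logarithmic) entropy form. -/
theorem stmt_3
    (R : Matrix (Fin 4) (Fin 4) ℝ)
    (hR : R = !![1, 1/4, 1/2, 1/2;
                 1/4, 1, 1/2, 1/2;
                 1/2, 1/2, 1, 0;
                 1/2, 1/2, 0, 1])
    (m : Finset (Fin 4) → ℝ)
    (hm : ∀ s : Finset (Fin 4),
      m s = (R.submatrix (fun i : {x // x ∈ s} => (i : Fin 4))
                         (fun i : {x // x ∈ s} => (i : Fin 4))).det)
    (g : Finset (Fin 4) → ℝ) (hg : ∀ s, g s = Real.log (m s)) :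
    R.IsSymm ∧ R.PosDef ∧
      m {0} * m {1} * m {0,1,2} * m {0,1,3} * m {2,3} >
        m {0,1} * m {0,2} * m {0,3} * m {1,2} * m {1,3} ∧
      g {0} + g {1} + g {0,1,2} + g {0,1,3} + g {2,3}
        - g {0,1} - g {0,2} - g {0,3} - g {1,2} - g {1,3} > 0 := by
  have hsymm : R.IsSymm := by
    subst hR; ext i j; fin_cases i <;> fin_cases j <;> rfl
  have h0 : m {0} = 1 := by
    rw [hm, minor_val R _ (![0]) (by decide) (by decide), Matrix.det_fin_one]
    subst hR
    norm_num [Matrix.cons_val_zero, Matrix.cons_val_one, Matrix.head_cons,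
      Matrix.cons_val_two, Matrix.cons_val_three, Matrix.tail_cons, Matrix.head_fin_const,
      Matrix.vecHead, Matrix.vecTail, Matrix.cons_val_succ]
  have h1 : m {1} = 1 := by
    rw [hm, minor_val R _ (![1]) (by decide) (by decide), Matrix.det_fin_one]
    subst hR
    norm_num [Matrix.cons_val_zero, Matrix.cons_val_one, Matrix.head_cons,
      Matrix.cons_val_two, Matrix.cons_val_three, Matrix.tail_cons, Matrix.head_fin_const,
      Matrix.vecHead, Matrix.vecTail, Matrix.cons_val_succ]
  have h23 : m {2,3} = 1 := by
    rw [hm, minor_val R _ (![2,3]) (by decide) (by decide), Matrix.det_fin_two]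
    subst hR
    norm_num [Matrix.cons_val_zero, Matrix.cons_val_one, Matrix.head_cons,
      Matrix.cons_val_two, Matrix.cons_val_three, Matrix.tail_cons, Matrix.head_fin_const,
      Matrix.vecHead, Matrix.vecTail, Matrix.cons_val_succ]
  have h01 : m {0,1} = 15/16 := by
    rw [hm, minor_val R _ (![0,1]) (by decide) (by decide), Matrix.det_fin_two]
    subst hR
    norm_num [Matrix.cons_val_zero, Matrix.cons_val_one, Matrix.head_cons,
      Matrix.cons_val_two, Matrix.cons_val_three, Matrix.tail_cons, Matrix.head_fin_const,
      Matrix.vecHead, Matrix.vecTail, Matrix.cons_val_succ]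
  have h02 : m {0,2} = 3/4 := by
    rw [hm, minor_val R _ (![0,2]) (by decide) (by decide), Matrix.det_fin_two]
    subst hR
    norm_num [Matrix.cons_val_zero, Matrix.cons_val_one, Matrix.head_cons,
      Matrix.cons_val_two, Matrix.cons_val_three, Matrix.tail_cons, Matrix.head_fin_const,
      Matrix.vecHead, Matrix.vecTail, Matrix.cons_val_succ]
  have h03 : m {0,3} = 3/4 := by
    rw [hm, minor_val R _ (![0,3]) (by decide) (by decide), Matrix.det_fin_two]
    subst hR
    norm_num [Matrix.cons_val_zero, Matrix.cons_val_one, Matrix.head_cons,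
      Matrix.cons_val_two, Matrix.cons_val_three, Matrix.tail_cons, Matrix.head_fin_const,
      Matrix.vecHead, Matrix.vecTail, Matrix.cons_val_succ]
  have h12 : m {1,2} = 3/4 := by
    rw [hm, minor_val R _ (![1,2]) (by decide) (by decide), Matrix.det_fin_two]
    subst hR
    norm_num [Matrix.cons_val_zero, Matrix.cons_val_one, Matrix.head_cons,
      Matrix.cons_val_two, Matrix.cons_val_three, Matrix.tail_cons, Matrix.head_fin_const,
      Matrix.vecHead, Matrix.vecTail, Matrix.cons_val_succ]
  have h13 : m {1,3} = 3/4 := by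
    rw [hm, minor_val R _ (![1,3]) (by decide) (by decide), Matrix.det_fin_two]
    subst hR
    norm_num [Matrix.cons_val_zero, Matrix.cons_val_one, Matrix.head_cons,
      Matrix.cons_val_two, Matrix.cons_val_three, Matrix.tail_cons, Matrix.head_fin_const,
      Matrix.vecHead, Matrix.vecTail, Matrix.cons_val_succ]
  have h012 : m {0,1,2} = 9/16 := by
    rw [hm, minor_val R _ (![0,1,2]) (by decide) (by decide), Matrix.det_fin_three]
    subst hR
    norm_num [Matrix.cons_val_zero, Matrix.cons_val_one, Matrix.head_cons,
      Matrix.cons_val_two, Matrix.cons_val_three, Matrix.tail_cons, Matrix.head_fin_const,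
      Matrix.vecHead, Matrix.vecTail, Matrix.cons_val_succ]
  have h013 : m {0,1,3} = 9/16 := by
    rw [hm, minor_val R _ (![0,1,3]) (by decide) (by decide), Matrix.det_fin_three]
    subst hR
    norm_num [Matrix.cons_val_zero, Matrix.cons_val_one, Matrix.head_cons,
      Matrix.cons_val_two, Matrix.cons_val_three, Matrix.tail_cons, Matrix.head_fin_const,
      Matrix.vecHead, Matrix.vecTail, Matrix.cons_val_succ]
  refine ⟨hsymm, ⟨?_, ?_⟩, ?_, ?_⟩
  · -- IsHermitian
    rw [Matrix.IsHermitian]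
    rw [show R.conjTranspose = R.transpose from rfl]
    exact hsymm
  · refine ((Matrix.posDef_iff_dotProduct_mulVec (M := R)).mpr ⟨(by
      rw [Matrix.IsHermitian, show R.conjTranspose = R.transpose from rfl]; exact hsymm), ?_⟩).2
    intro x hx
    have hx' : x 0 ≠ 0 ∨ x 1 ≠ 0 ∨ x 2 ≠ 0 ∨ x 3 ≠ 0 := by
      by_contra h
      push_neg at h
      obtain ⟨h0', h1', h2', h3'⟩ := h
      apply hx
      funext i
      fin_cases i <;> assumption
    subst hR
    norm_num [Matrix.mulVec, dotProduct, star_trivial, Fin.sum_univ_four,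
      Matrix.cons_val_zero, Matrix.cons_val_one, Matrix.head_cons,
      Matrix.cons_val_two, Matrix.cons_val_three, Matrix.tail_cons, Matrix.head_fin_const,
      Matrix.vecHead, Matrix.vecTail, Matrix.cons_val_succ]
    rcases hx' with hi | hi | hi | hi <;>
      nlinarith [sq_nonneg (x 0 - x 1), sq_nonneg (x 0), sq_nonneg (x 1),
        sq_nonneg (2 * x 2 + x 0 + x 1), sq_nonneg (2 * x 3 + x 0 + x 1),
        mul_self_pos.mpr hi]
  · rw [h0, h1, h23, h01, h02, h03, h12, h13, h012, h013]
    norm_num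
  · rw [hg, hg, hg, hg, hg, hg, hg, hg, hg, hg,
      h0, h1, h23, h01, h02, h03, h12, h13, h012, h013]
    have e1 : Real.log ((9:ℝ)/16) + Real.log ((9:ℝ)/16) = Real.log ((81:ℝ)/256) := by
      rw [← Real.log_mul (by norm_num) (by norm_num)]; norm_num
    have e2 : Real.log ((15:ℝ)/16) + Real.log ((3:ℝ)/4) + Real.log ((3:ℝ)/4)
        + Real.log ((3:ℝ)/4) + Real.log ((3:ℝ)/4) = Real.log ((1215:ℝ)/4096) := by
      rw [← Real.log_mul (by norm_num) (by norm_num), ← Real.log_mul (by norm_num) (by norm_num),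
        ← Real.log_mul (by norm_num) (by norm_num), ← Real.log_mul (by norm_num) (by norm_num)]
      norm_num
    have hlt : Real.log ((1215:ℝ)/4096) < Real.log ((81:ℝ)/256) :=
      Real.log_lt_log (by norm_num) (by norm_num)
    simp only [Real.log_one]
    linarith
end

section
/- (Convex cone of the entropy region of 3 scalar Gaussians) Let G₃ˢ be the set of all functions g from the nonempty subsets of {1,2,3} to ℝ of the form g(s) = log det R_s for some symmetric positive definite matrix R ∈ ℝ^(3×3), where R_s is the principal submatrix of R with rows and columns indexed by s. Then the topological closure of the convex cone generated by G₃ˢ (the set of all finite nonnegative linear combinations of elements of G₃ˢ) equals the set of all functions g from nonempty subsets of {1,2,3} to ℝ satisfying, for all distinct i, j, k ∈ {1,2,3}: g({i,j}) ≤ g({i}) + g({j}) and g({1,2,3}) + g({k}) ≤ g({i,k}) + g({j,k}). -/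
open Matrix Real Filter Topology

namespace S6

abbrev σ3 := {s : Finset (Fin 3) // s.Nonempty}

def t0 : σ3 := ⟨{0}, by decide⟩
def t1 : σ3 := ⟨{1}, by decide⟩
def t2 : σ3 := ⟨{2}, by decide⟩
def t01 : σ3 := ⟨{0,1}, by decide⟩
def t02 : σ3 := ⟨{0,2}, by decide⟩
def t12 : σ3 := ⟨{1,2}, by decide⟩
def t012 : σ3 := ⟨{0,1,2}, by decide⟩

lemma canon : ∀ s : σ3, s = t0 ∨ s = t1 ∨ s = t2 ∨ s = t01 ∨ s = t02 ∨ s = t12 ∨ s = t012 := by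
  decide

/-- log-det vector of a matrix -/
noncomputable def ldv (R : Matrix (Fin 3) (Fin 3) ℝ) : σ3 → ℝ := fun s =>
  Real.log (R.submatrix (fun i : {x // x ∈ s.1} => (i : Fin 3))
                        (fun i : {x // x ∈ s.1} => (i : Fin 3))).det

section dets

def e0 : Fin 1 ≃ {x : Fin 3 // x ∈ (t0.1 : Finset (Fin 3))} :=
  ⟨fun _ => ⟨0, by decide⟩, fun _ => 0, by decide, by decide⟩
def e1 : Fin 1 ≃ {x : Fin 3 // x ∈ (t1.1 : Finset (Fin 3))} :=
  ⟨fun _ => ⟨1, by decide⟩, fun _ => 0, by decide, by decide⟩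
def e2 : Fin 1 ≃ {x : Fin 3 // x ∈ (t2.1 : Finset (Fin 3))} :=
  ⟨fun _ => ⟨2, by decide⟩, fun _ => 0, by decide, by decide⟩
def e01 : Fin 2 ≃ {x : Fin 3 // x ∈ (t01.1 : Finset (Fin 3))} :=
  ⟨![⟨0, by decide⟩, ⟨1, by decide⟩], fun x => if (x : Fin 3) = 0 then 0 else 1,
    by decide, by decide⟩
def e02 : Fin 2 ≃ {x : Fin 3 // x ∈ (t02.1 : Finset (Fin 3))} :=
  ⟨![⟨0, by decide⟩, ⟨2, by decide⟩], fun x => if (x : Fin 3) = 0 then 0 else 1,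
    by decide, by decide⟩
def e12 : Fin 2 ≃ {x : Fin 3 // x ∈ (t12.1 : Finset (Fin 3))} :=
  ⟨![⟨1, by decide⟩, ⟨2, by decide⟩], fun x => if (x : Fin 3) = 1 then 0 else 1,
    by decide, by decide⟩
def e012 : Fin 3 ≃ {x : Fin 3 // x ∈ (t012.1 : Finset (Fin 3))} :=
  ⟨fun i => ⟨i, by fin_cases i <;> decide⟩, fun x => x, by decide, by decide⟩

variable (R : Matrix (Fin 3) (Fin 3) ℝ)

lemma ldv_t0 : ldv R t0 = Real.log (R 0 0) := by
  rw [ldv, ← Matrix.det_submatrix_equiv_self e0, Matrix.submatrix_submatrix, Matrix.det_fin_one]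
  have h0 : ((e0 0 : {x : Fin 3 // x ∈ (t0.1 : Finset (Fin 3))}) : Fin 3) = 0 := by decide
  simp only [Matrix.submatrix_apply, Function.comp_apply, h0]

lemma ldv_t1 : ldv R t1 = Real.log (R 1 1) := by
  rw [ldv, ← Matrix.det_submatrix_equiv_self e1, Matrix.submatrix_submatrix, Matrix.det_fin_one]
  have h0 : ((e1 0 : {x : Fin 3 // x ∈ (t1.1 : Finset (Fin 3))}) : Fin 3) = 1 := by decide
  simp only [Matrix.submatrix_apply, Function.comp_apply, h0]

lemma ldv_t2 : ldv R t2 = Real.log (R 2 2) := by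
  rw [ldv, ← Matrix.det_submatrix_equiv_self e2, Matrix.submatrix_submatrix, Matrix.det_fin_one]
  have h0 : ((e2 0 : {x : Fin 3 // x ∈ (t2.1 : Finset (Fin 3))}) : Fin 3) = 2 := by decide
  simp only [Matrix.submatrix_apply, Function.comp_apply, h0]

lemma ldv_t01 : ldv R t01 = Real.log (R 0 0 * R 1 1 - R 0 1 * R 1 0) := by
  rw [ldv, ← Matrix.det_submatrix_equiv_self e01, Matrix.submatrix_submatrix, Matrix.det_fin_two]
  have h0 : ((e01 0 : {x : Fin 3 // x ∈ (t01.1 : Finset (Fin 3))}) : Fin 3) = 0 := by decide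
  have h1 : ((e01 1 : {x : Fin 3 // x ∈ (t01.1 : Finset (Fin 3))}) : Fin 3) = 1 := by decide
  simp only [Matrix.submatrix_apply, Function.comp_apply, h0, h1]

lemma ldv_t02 : ldv R t02 = Real.log (R 0 0 * R 2 2 - R 0 2 * R 2 0) := by
  rw [ldv, ← Matrix.det_submatrix_equiv_self e02, Matrix.submatrix_submatrix, Matrix.det_fin_two]
  have h0 : ((e02 0 : {x : Fin 3 // x ∈ (t02.1 : Finset (Fin 3))}) : Fin 3) = 0 := by decide
  have h1 : ((e02 1 : {x : Fin 3 // x ∈ (t02.1 : Finset (Fin 3))}) : Fin 3) = 2 := by decide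
  simp only [Matrix.submatrix_apply, Function.comp_apply, h0, h1]

lemma ldv_t12 : ldv R t12 = Real.log (R 1 1 * R 2 2 - R 1 2 * R 2 1) := by
  rw [ldv, ← Matrix.det_submatrix_equiv_self e12, Matrix.submatrix_submatrix, Matrix.det_fin_two]
  have h0 : ((e12 0 : {x : Fin 3 // x ∈ (t12.1 : Finset (Fin 3))}) : Fin 3) = 1 := by decide
  have h1 : ((e12 1 : {x : Fin 3 // x ∈ (t12.1 : Finset (Fin 3))}) : Fin 3) = 2 := by decide
  simp only [Matrix.submatrix_apply, Function.comp_apply, h0, h1]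

lemma ldv_t012 : ldv R t012 = Real.log
    (R 0 0 * R 1 1 * R 2 2 - R 0 0 * R 1 2 * R 2 1 - R 0 1 * R 1 0 * R 2 2 +
      R 0 1 * R 1 2 * R 2 0 + R 0 2 * R 1 0 * R 2 1 - R 0 2 * R 1 1 * R 2 0) := by
  rw [ldv, ← Matrix.det_submatrix_equiv_self e012, Matrix.submatrix_submatrix,
    Matrix.det_fin_three]
  have h0 : ((e012 0 : {x : Fin 3 // x ∈ (t012.1 : Finset (Fin 3))}) : Fin 3) = 0 := by decide
  have h1 : ((e012 1 : {x : Fin 3 // x ∈ (t012.1 : Finset (Fin 3))}) : Fin 3) = 1 := by decide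
  have h2 : ((e012 2 : {x : Fin 3 // x ∈ (t012.1 : Finset (Fin 3))}) : Fin 3) = 2 := by decide
  simp only [Matrix.submatrix_apply, Function.comp_apply, h0, h1, h2]

end dets

section pos

lemma quad (R : Matrix (Fin 3) (Fin 3) ℝ) (x : Fin 3 → ℝ) :
    dotProduct (star x) (R *ᵥ x) =
      x 0 * (R 0 0 * x 0 + R 0 1 * x 1 + R 0 2 * x 2) +
      x 1 * (R 1 0 * x 0 + R 1 1 * x 1 + R 1 2 * x 2) +
      x 2 * (R 2 0 * x 0 + R 2 1 * x 1 + R 2 2 * x 2) := by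
  simp [dotProduct, Matrix.mulVec, Fin.sum_univ_three]

lemma pos_comp (x : Fin 3 → ℝ) (hx : x ≠ 0) : 0 < (x 0)^2 + (x 1)^2 + (x 2)^2 := by
  rcases Function.ne_iff.1 hx with ⟨i, hi⟩
  have hi' : x i ≠ 0 := by simpa using hi
  have hp : 0 < x i ^ 2 := (sq_nonneg _).lt_of_ne (Ne.symm (pow_ne_zero 2 hi'))
  have : ∀ m : Fin 3, m = 0 ∨ m = 1 ∨ m = 2 := by decide
  rcases this i with rfl | rfl | rfl <;>
    nlinarith [sq_nonneg (x 0), sq_nonneg (x 1), sq_nonneg (x 2)]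

lemma vec_ne (x : Fin 3 → ℝ) (i : Fin 3) (h : x i ≠ 0) : x ≠ 0 :=
  fun hx => h (by rw [hx]; rfl)

variable {R : Matrix (Fin 3) (Fin 3) ℝ}

lemma diag_pos (hR : R.PosDef) (i : Fin 3) : 0 < R i i := by
  fin_cases i
  · have := hR.dotProduct_mulVec_pos (x := ![1,0,0]) (vec_ne _ 0 one_ne_zero)
    rw [quad] at this; norm_num at this; simpa using this
  · have := hR.dotProduct_mulVec_pos (x := ![0,1,0]) (vec_ne _ 1 one_ne_zero)
    rw [quad] at this; norm_num at this; simpa using this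
  · have := hR.dotProduct_mulVec_pos (x := ![0,0,1]) (vec_ne _ 2 one_ne_zero)
    rw [quad] at this; norm_num at this; simpa using this

lemma minor01_pos (hR : R.PosDef) (hs : R.IsSymm) : 0 < R 0 0 * R 1 1 - R 0 1 * R 1 0 := by
  have h11 : 0 < R 1 1 := diag_pos hR 1
  have hsym : R 0 1 = R 1 0 := hs.apply 1 0
  have := hR.dotProduct_mulVec_pos (x := ![R 1 1, -(R 0 1), 0]) (vec_ne _ 0 h11.ne')
  rw [quad] at this; norm_num [Matrix.cons_val_two, Matrix.tail_cons, Matrix.head_cons] at this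
  nlinarith [this, h11]

lemma minor02_pos (hR : R.PosDef) (hs : R.IsSymm) : 0 < R 0 0 * R 2 2 - R 0 2 * R 2 0 := by
  have h22 : 0 < R 2 2 := diag_pos hR 2
  have hsym : R 0 2 = R 2 0 := hs.apply 2 0
  have := hR.dotProduct_mulVec_pos (x := ![R 2 2, 0, -(R 0 2)]) (vec_ne _ 0 h22.ne')
  rw [quad] at this; norm_num [Matrix.cons_val_two, Matrix.tail_cons, Matrix.head_cons] at this
  nlinarith [this, h22]

lemma minor12_pos (hR : R.PosDef) (hs : R.IsSymm) : 0 < R 1 1 * R 2 2 - R 1 2 * R 2 1 := by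
  have h22 : 0 < R 2 2 := diag_pos hR 2
  have hsym : R 1 2 = R 2 1 := hs.apply 2 1
  have := hR.dotProduct_mulVec_pos (x := ![0, R 2 2, -(R 1 2)]) (vec_ne _ 1 h22.ne')
  rw [quad] at this; norm_num [Matrix.cons_val_two, Matrix.tail_cons, Matrix.head_cons] at this
  nlinarith [this, h22]

end pos

/-! ### The polymatroid-type condition -/

def P (g : σ3 → ℝ) : Prop :=
  g t01 ≤ g t0 + g t1 ∧ g t02 ≤ g t0 + g t2 ∧ g t12 ≤ g t1 + g t2 ∧
  g t012 + g t0 ≤ g t01 + g t02 ∧ g t012 + g t1 ≤ g t01 + g t12 ∧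
  g t012 + g t2 ≤ g t02 + g t12

lemma pair_ineq (a b d : ℝ) (ha : 0 < a) (hb : 0 < b) (hm : 0 < a*b - d*d) :
    Real.log (a*b - d*d) ≤ Real.log a + Real.log b := by
  rw [← Real.log_mul ha.ne' hb.ne']
  exact (Real.log_le_log_iff hm (by positivity)).2 (by nlinarith [sq_nonneg d])

lemma triple_ineq (a b c d e f : ℝ) (ha : 0 < a) (hm1 : 0 < a*b - d*d) (hm2 : 0 < a*c - e*e)
    (hd : 0 < a*b*c - a*f*f - d*d*c + d*f*e + e*d*f - e*b*e) :
    Real.log (a*b*c - a*f*f - d*d*c + d*f*e + e*d*f - e*b*e) + Real.log a ≤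
      Real.log (a*b - d*d) + Real.log (a*c - e*e) := by
  rw [← Real.log_mul hd.ne' ha.ne', ← Real.log_mul hm1.ne' hm2.ne']
  refine (Real.log_le_log_iff (by positivity) (by positivity)).2 ?_
  nlinarith [sq_nonneg (d*e - a*f)]

lemma P_ldv (R : Matrix (Fin 3) (Fin 3) ℝ) (hs : R.IsSymm) (hR : R.PosDef) : P (ldv R) := by
  have h10 : R 1 0 = R 0 1 := (hs.apply 1 0).symm
  have h20 : R 2 0 = R 0 2 := (hs.apply 2 0).symm
  have h21 : R 2 1 = R 1 2 := (hs.apply 2 1).symm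
  have d0 := diag_pos hR 0
  have d1 := diag_pos hR 1
  have d2 := diag_pos hR 2
  have M01 : 0 < R 0 0 * R 1 1 - R 0 1 * R 0 1 := by
    have := minor01_pos hR hs; rwa [h10] at this
  have M02 : 0 < R 0 0 * R 2 2 - R 0 2 * R 0 2 := by
    have := minor02_pos hR hs; rwa [h20] at this
  have M12 : 0 < R 1 1 * R 2 2 - R 1 2 * R 1 2 := by
    have := minor12_pos hR hs; rwa [h21] at this
  have hdet : 0 < R 0 0 * R 1 1 * R 2 2 - R 0 0 * R 1 2 * R 1 2 - R 0 1 * R 0 1 * R 2 2 +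
      R 0 1 * R 1 2 * R 0 2 + R 0 2 * R 0 1 * R 1 2 - R 0 2 * R 1 1 * R 0 2 := by
    have := hR.det_pos
    rw [Matrix.det_fin_three] at this
    rw [h10, h20, h21] at this
    linarith
  refine ⟨?_, ?_, ?_, ?_, ?_, ?_⟩
  · rw [ldv_t01, ldv_t0, ldv_t1, h10]
    exact pair_ineq _ _ _ d0 d1 M01
  · rw [ldv_t02, ldv_t0, ldv_t2, h20]
    exact pair_ineq _ _ _ d0 d2 M02
  · rw [ldv_t12, ldv_t1, ldv_t2, h21]
    exact pair_ineq _ _ _ d1 d2 M12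
  · rw [ldv_t012, ldv_t0, ldv_t01, ldv_t02, h10, h20, h21]
    exact triple_ineq (R 0 0) (R 1 1) (R 2 2) (R 0 1) (R 0 2) (R 1 2) d0 M01 M02 hdet
  · rw [ldv_t012, ldv_t1, ldv_t01, ldv_t12, h10, h20, h21]
    rw [show R 0 0 * R 1 1 * R 2 2 - R 0 0 * R 1 2 * R 1 2 - R 0 1 * R 0 1 * R 2 2 +
        R 0 1 * R 1 2 * R 0 2 + R 0 2 * R 0 1 * R 1 2 - R 0 2 * R 1 1 * R 0 2 =
        R 1 1 * R 0 0 * R 2 2 - R 1 1 * R 0 2 * R 0 2 - R 0 1 * R 0 1 * R 2 2 +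
        R 0 1 * R 0 2 * R 1 2 + R 1 2 * R 0 1 * R 0 2 - R 1 2 * R 0 0 * R 1 2 from by ring]
    rw [show R 0 0 * R 1 1 - R 0 1 * R 0 1 = R 1 1 * R 0 0 - R 0 1 * R 0 1 from by ring]
    exact triple_ineq (R 1 1) (R 0 0) (R 2 2) (R 0 1) (R 1 2) (R 0 2) d1
      (by linarith) (by linarith [M12]) (by linarith [hdet])
  · rw [ldv_t012, ldv_t2, ldv_t02, ldv_t12, h10, h20, h21]
    rw [show R 0 0 * R 1 1 * R 2 2 - R 0 0 * R 1 2 * R 1 2 - R 0 1 * R 0 1 * R 2 2 +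
        R 0 1 * R 1 2 * R 0 2 + R 0 2 * R 0 1 * R 1 2 - R 0 2 * R 1 1 * R 0 2 =
        R 2 2 * R 0 0 * R 1 1 - R 2 2 * R 0 1 * R 0 1 - R 0 2 * R 0 2 * R 1 1 +
        R 0 2 * R 0 1 * R 1 2 + R 1 2 * R 0 2 * R 0 1 - R 1 2 * R 0 0 * R 1 2 from by ring]
    rw [show R 0 0 * R 2 2 - R 0 2 * R 0 2 = R 2 2 * R 0 0 - R 0 2 * R 0 2 from by ring]
    rw [show R 1 1 * R 2 2 - R 1 2 * R 1 2 = R 2 2 * R 1 1 - R 1 2 * R 1 2 from by ring]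
    exact triple_ineq (R 2 2) (R 0 0) (R 1 1) (R 0 2) (R 1 2) (R 0 1) d2
      (by linarith [M02]) (by linarith [M12]) (by linarith [hdet])

lemma isClosed_P : IsClosed {g : σ3 → ℝ | P g} := by
  have cont : ∀ t : σ3, Continuous fun g : σ3 → ℝ => g t := fun t => continuous_apply t
  have h1 : IsClosed {g : σ3 → ℝ | g t01 ≤ g t0 + g t1} :=
    isClosed_le (cont _) ((cont _).add (cont _))
  have h2 : IsClosed {g : σ3 → ℝ | g t02 ≤ g t0 + g t2} :=
    isClosed_le (cont _) ((cont _).add (cont _))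
  have h3 : IsClosed {g : σ3 → ℝ | g t12 ≤ g t1 + g t2} :=
    isClosed_le (cont _) ((cont _).add (cont _))
  have h4 : IsClosed {g : σ3 → ℝ | g t012 + g t0 ≤ g t01 + g t02} :=
    isClosed_le ((cont _).add (cont _)) ((cont _).add (cont _))
  have h5 : IsClosed {g : σ3 → ℝ | g t012 + g t1 ≤ g t01 + g t12} :=
    isClosed_le ((cont _).add (cont _)) ((cont _).add (cont _))
  have h6 : IsClosed {g : σ3 → ℝ | g t012 + g t2 ≤ g t02 + g t12} :=
    isClosed_le ((cont _).add (cont _)) ((cont _).add (cont _))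
  simp only [P, Set.setOf_and]
  exact h1.inter (h2.inter (h3.inter (h4.inter (h5.inter h6))))

lemma sumA {k : ℕ} (c : Fin k → ℝ) (v : Fin k → σ3 → ℝ) (hc : ∀ i, 0 ≤ c i)
    (x y z : σ3) (h : ∀ i, v i x ≤ v i y + v i z) :
    (∑ i, c i • v i) x ≤ (∑ i, c i • v i) y + (∑ i, c i • v i) z := by
  simp only [Finset.sum_apply, Pi.smul_apply, smul_eq_mul, ← Finset.sum_add_distrib]
  exact Finset.sum_le_sum fun i _ => by nlinarith [hc i, h i]

lemma sumB {k : ℕ} (c : Fin k → ℝ) (v : Fin k → σ3 → ℝ) (hc : ∀ i, 0 ≤ c i)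
    (x y z w : σ3) (h : ∀ i, v i x + v i y ≤ v i z + v i w) :
    (∑ i, c i • v i) x + (∑ i, c i • v i) y ≤ (∑ i, c i • v i) z + (∑ i, c i • v i) w := by
  simp only [Finset.sum_apply, Pi.smul_apply, smul_eq_mul, ← Finset.sum_add_distrib]
  exact Finset.sum_le_sum fun i _ => by nlinarith [hc i, h i]



/-! ### Generator matrices -/

section gens

-- diagonal generator
noncomputable def Dm (h0 h1 h2 : ℝ) : Matrix (Fin 3) (Fin 3) ℝ :=
  Matrix.diagonal ![Real.exp h0, Real.exp h1, Real.exp h2]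

lemma Dm_symm (h0 h1 h2 : ℝ) : (Dm h0 h1 h2).IsSymm := Matrix.isSymm_diagonal _

lemma Dm_pd (h0 h1 h2 : ℝ) : (Dm h0 h1 h2).PosDef := by
  refine Matrix.PosDef.diagonal ?_
  intro i; fin_cases i <;> simp [Real.exp_pos]

lemma ldv_Dm_t0 (h0 h1 h2 : ℝ) : ldv (Dm h0 h1 h2) t0 = h0 := by
  rw [ldv_t0]; norm_num [Dm, Matrix.diagonal_apply_eq]

lemma ldv_Dm_t1 (h0 h1 h2 : ℝ) : ldv (Dm h0 h1 h2) t1 = h1 := by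
  rw [ldv_t1]; norm_num [Dm, Matrix.diagonal_apply_eq]

lemma ldv_Dm_t2 (h0 h1 h2 : ℝ) : ldv (Dm h0 h1 h2) t2 = h2 := by
  rw [ldv_t2]; norm_num [Dm, Matrix.diagonal_apply_eq, Matrix.cons_val_two, Matrix.tail_cons, Matrix.head_cons]

lemma ldv_Dm_t01 (h0 h1 h2 : ℝ) : ldv (Dm h0 h1 h2) t01 = h0 + h1 := by
  rw [ldv_t01]
  show Real.log (Real.exp h0 * Real.exp h1 - 0 * 0) = h0 + h1
  rw [mul_zero, sub_zero, ← Real.exp_add, Real.log_exp]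

lemma ldv_Dm_t02 (h0 h1 h2 : ℝ) : ldv (Dm h0 h1 h2) t02 = h0 + h2 := by
  rw [ldv_t02]
  show Real.log (Real.exp h0 * Real.exp h2 - 0 * 0) = h0 + h2
  rw [mul_zero, sub_zero, ← Real.exp_add, Real.log_exp]

lemma ldv_Dm_t12 (h0 h1 h2 : ℝ) : ldv (Dm h0 h1 h2) t12 = h1 + h2 := by
  rw [ldv_t12]
  show Real.log (Real.exp h1 * Real.exp h2 - 0 * 0) = h1 + h2
  rw [mul_zero, sub_zero, ← Real.exp_add, Real.log_exp]

lemma ldv_Dm_t012 (h0 h1 h2 : ℝ) : ldv (Dm h0 h1 h2) t012 = h0 + h1 + h2 := by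
  rw [ldv_t012]
  show Real.log (Real.exp h0 * Real.exp h1 * Real.exp h2 - Real.exp h0 * 0 * 0 -
    0 * 0 * Real.exp h2 + 0 * 0 * 0 + 0 * 0 * 0 - 0 * Real.exp h1 * 0) = h0 + h1 + h2
  norm_num
  rw [← Real.exp_add, ← Real.exp_add, Real.log_exp]

-- pair generators
noncomputable def Pm01 : Matrix (Fin 3) (Fin 3) ℝ := ![![1,1/2,0],![1/2,1,0],![0,0,1]]
noncomputable def Pm02 : Matrix (Fin 3) (Fin 3) ℝ := ![![1,0,1/2],![0,1,0],![1/2,0,1]]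
noncomputable def Pm12 : Matrix (Fin 3) (Fin 3) ℝ := ![![1,0,0],![0,1,1/2],![0,1/2,1]]

lemma Pm01_symm : Pm01.IsSymm := by
  show Pm01ᵀ = Pm01; ext i j; fin_cases i <;> fin_cases j <;> rfl
lemma Pm02_symm : Pm02.IsSymm := by
  show Pm02ᵀ = Pm02; ext i j; fin_cases i <;> fin_cases j <;> rfl
lemma Pm12_symm : Pm12.IsSymm := by
  show Pm12ᵀ = Pm12; ext i j; fin_cases i <;> fin_cases j <;> rfl

lemma Pm01_pd : Pm01.PosDef := by
  refine Matrix.PosDef.of_dotProduct_mulVec_pos (Pm01_symm) fun x hx => ?_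
  rw [quad]
  have h := pos_comp x hx
  show (0:ℝ) < x 0 * ((1:ℝ) * x 0 + 1/2 * x 1 + 0 * x 2) +
      x 1 * (1/2 * x 0 + 1 * x 1 + 0 * x 2) + x 2 * (0 * x 0 + 0 * x 1 + 1 * x 2)
  nlinarith [sq_nonneg (x 0 + x 1)]

lemma Pm02_pd : Pm02.PosDef := by
  refine Matrix.PosDef.of_dotProduct_mulVec_pos (Pm02_symm) fun x hx => ?_
  rw [quad]
  have h := pos_comp x hx
  show (0:ℝ) < x 0 * ((1:ℝ) * x 0 + 0 * x 1 + 1/2 * x 2) +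
      x 1 * (0 * x 0 + 1 * x 1 + 0 * x 2) + x 2 * (1/2 * x 0 + 0 * x 1 + 1 * x 2)
  nlinarith [sq_nonneg (x 0 + x 2)]

lemma Pm12_pd : Pm12.PosDef := by
  refine Matrix.PosDef.of_dotProduct_mulVec_pos (Pm12_symm) fun x hx => ?_
  rw [quad]
  have h := pos_comp x hx
  show (0:ℝ) < x 0 * ((1:ℝ) * x 0 + 0 * x 1 + 0 * x 2) +
      x 1 * (0 * x 0 + 1 * x 1 + 1/2 * x 2) + x 2 * (0 * x 0 + 1/2 * x 1 + 1 * x 2)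
  nlinarith [sq_nonneg (x 1 + x 2)]

lemma ldv_Pm01_t0 : ldv Pm01 t0 = 0 := by rw [ldv_t0]; norm_num [Pm01]
lemma ldv_Pm01_t1 : ldv Pm01 t1 = 0 := by rw [ldv_t1]; norm_num [Pm01]
lemma ldv_Pm01_t2 : ldv Pm01 t2 = 0 := by rw [ldv_t2]; norm_num [Pm01, Matrix.cons_val_two, Matrix.tail_cons, Matrix.head_cons]
lemma ldv_Pm01_t01 : ldv Pm01 t01 = Real.log (3/4) := by rw [ldv_t01]; norm_num [Pm01]
lemma ldv_Pm01_t02 : ldv Pm01 t02 = 0 := by rw [ldv_t02]; norm_num [Pm01, Matrix.cons_val_two, Matrix.tail_cons, Matrix.head_cons]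
lemma ldv_Pm01_t12 : ldv Pm01 t12 = 0 := by rw [ldv_t12]; norm_num [Pm01, Matrix.cons_val_two, Matrix.tail_cons, Matrix.head_cons]
lemma ldv_Pm01_t012 : ldv Pm01 t012 = Real.log (3/4) := by rw [ldv_t012]; norm_num [Pm01, Matrix.cons_val_two, Matrix.tail_cons, Matrix.head_cons]

lemma ldv_Pm02_t0 : ldv Pm02 t0 = 0 := by rw [ldv_t0]; norm_num [Pm02]
lemma ldv_Pm02_t1 : ldv Pm02 t1 = 0 := by rw [ldv_t1]; norm_num [Pm02]
lemma ldv_Pm02_t2 : ldv Pm02 t2 = 0 := by rw [ldv_t2]; norm_num [Pm02, Matrix.cons_val_two, Matrix.tail_cons, Matrix.head_cons]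
lemma ldv_Pm02_t01 : ldv Pm02 t01 = 0 := by rw [ldv_t01]; norm_num [Pm02]
lemma ldv_Pm02_t02 : ldv Pm02 t02 = Real.log (3/4) := by rw [ldv_t02]; norm_num [Pm02, Matrix.cons_val_two, Matrix.tail_cons, Matrix.head_cons]
lemma ldv_Pm02_t12 : ldv Pm02 t12 = 0 := by rw [ldv_t12]; norm_num [Pm02, Matrix.cons_val_two, Matrix.tail_cons, Matrix.head_cons]
lemma ldv_Pm02_t012 : ldv Pm02 t012 = Real.log (3/4) := by rw [ldv_t012]; norm_num [Pm02, Matrix.cons_val_two, Matrix.tail_cons, Matrix.head_cons]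

lemma ldv_Pm12_t0 : ldv Pm12 t0 = 0 := by rw [ldv_t0]; norm_num [Pm12]
lemma ldv_Pm12_t1 : ldv Pm12 t1 = 0 := by rw [ldv_t1]; norm_num [Pm12]
lemma ldv_Pm12_t2 : ldv Pm12 t2 = 0 := by rw [ldv_t2]; norm_num [Pm12, Matrix.cons_val_two, Matrix.tail_cons, Matrix.head_cons]
lemma ldv_Pm12_t01 : ldv Pm12 t01 = 0 := by rw [ldv_t01]; norm_num [Pm12]
lemma ldv_Pm12_t02 : ldv Pm12 t02 = 0 := by rw [ldv_t02]; norm_num [Pm12, Matrix.cons_val_two, Matrix.tail_cons, Matrix.head_cons]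
lemma ldv_Pm12_t12 : ldv Pm12 t12 = Real.log (3/4) := by rw [ldv_t12]; norm_num [Pm12, Matrix.cons_val_two, Matrix.tail_cons, Matrix.head_cons]
lemma ldv_Pm12_t012 : ldv Pm12 t012 = Real.log (3/4) := by rw [ldv_t012]; norm_num [Pm12, Matrix.cons_val_two, Matrix.tail_cons, Matrix.head_cons]

-- W generator family
noncomputable def eps (n : ℕ) : ℝ := Real.exp (-((n:ℝ)+1))

lemma eps_pos (n : ℕ) : 0 < eps n := Real.exp_pos _
lemma eps_lt_one (n : ℕ) : eps n < 1 := by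
  rw [eps, Real.exp_lt_one_iff]
  have : (0:ℝ) ≤ (n:ℝ) := Nat.cast_nonneg n
  linarith
lemma eps_le_one (n : ℕ) : eps n ≤ 1 := (eps_lt_one n).le

noncomputable def Wm (n : ℕ) : Matrix (Fin 3) (Fin 3) ℝ :=
  ![![1, 1 - eps n, 1 - eps n], ![1 - eps n, 1, 1 - eps n], ![1 - eps n, 1 - eps n, 1]]

lemma Wm_symm (n : ℕ) : (Wm n).IsSymm := by
  show (Wm n)ᵀ = Wm n; ext i j; fin_cases i <;> fin_cases j <;> rfl

lemma Wm_pd (n : ℕ) : (Wm n).PosDef := by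
  refine Matrix.PosDef.of_dotProduct_mulVec_pos (Wm_symm n) fun x hx => ?_
  rw [quad]
  have h := pos_comp x hx
  have he := eps_pos n
  have he1 := eps_le_one n
  show (0:ℝ) < x 0 * ((1:ℝ) * x 0 + (1 - eps n) * x 1 + (1 - eps n) * x 2) +
      x 1 * ((1 - eps n) * x 0 + 1 * x 1 + (1 - eps n) * x 2) +
      x 2 * ((1 - eps n) * x 0 + (1 - eps n) * x 1 + 1 * x 2)
  nlinarith [mul_nonneg (by linarith : (0:ℝ) ≤ 1 - eps n) (sq_nonneg (x 0 + x 1 + x 2)),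
    mul_pos he h]

lemma ldv_Wm_t0 (n : ℕ) : ldv (Wm n) t0 = 0 := by rw [ldv_t0]; norm_num [Wm]
lemma ldv_Wm_t1 (n : ℕ) : ldv (Wm n) t1 = 0 := by rw [ldv_t1]; norm_num [Wm]
lemma ldv_Wm_t2 (n : ℕ) : ldv (Wm n) t2 = 0 := by rw [ldv_t2]; norm_num [Wm, Matrix.cons_val_two, Matrix.tail_cons, Matrix.head_cons]

lemma log_eps (n : ℕ) : Real.log (eps n) = -((n:ℝ)+1) := Real.log_exp _

lemma Wm_pair_val (n : ℕ) :
    Real.log ((1:ℝ) * 1 - (1 - eps n) * (1 - eps n)) = -((n:ℝ)+1) + Real.log (2 - eps n) := by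
  have he := eps_pos n
  have he1 := eps_lt_one n
  rw [show (1:ℝ) * 1 - (1 - eps n) * (1 - eps n) = eps n * (2 - eps n) from by ring]
  rw [Real.log_mul he.ne' (by linarith : (2:ℝ) - eps n ≠ 0), log_eps]

lemma ldv_Wm_t01 (n : ℕ) : ldv (Wm n) t01 = -((n:ℝ)+1) + Real.log (2 - eps n) := by
  rw [ldv_t01]
  have : Wm n 0 0 * Wm n 1 1 - Wm n 0 1 * Wm n 1 0
      = (1:ℝ) * 1 - (1 - eps n) * (1 - eps n) := rfl
  rw [this, Wm_pair_val]

lemma ldv_Wm_t02 (n : ℕ) : ldv (Wm n) t02 = -((n:ℝ)+1) + Real.log (2 - eps n) := by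
  rw [ldv_t02]
  have : Wm n 0 0 * Wm n 2 2 - Wm n 0 2 * Wm n 2 0
      = (1:ℝ) * 1 - (1 - eps n) * (1 - eps n) := rfl
  rw [this, Wm_pair_val]

lemma ldv_Wm_t12 (n : ℕ) : ldv (Wm n) t12 = -((n:ℝ)+1) + Real.log (2 - eps n) := by
  rw [ldv_t12]
  have : Wm n 1 1 * Wm n 2 2 - Wm n 1 2 * Wm n 2 1
      = (1:ℝ) * 1 - (1 - eps n) * (1 - eps n) := rfl
  rw [this, Wm_pair_val]

lemma ldv_Wm_t012 (n : ℕ) :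
    ldv (Wm n) t012 = -2*((n:ℝ)+1) + Real.log (3 - 2 * eps n) := by
  rw [ldv_t012]
  have he := eps_pos n
  have he1 := eps_lt_one n
  have : Wm n 0 0 * Wm n 1 1 * Wm n 2 2 - Wm n 0 0 * Wm n 1 2 * Wm n 2 1 -
      Wm n 0 1 * Wm n 1 0 * Wm n 2 2 + Wm n 0 1 * Wm n 1 2 * Wm n 2 0 +
      Wm n 0 2 * Wm n 1 0 * Wm n 2 1 - Wm n 0 2 * Wm n 1 1 * Wm n 2 0
      = eps n * eps n * (3 - 2 * eps n) := by
    show (1:ℝ) * 1 * 1 - 1 * (1 - eps n) * (1 - eps n) - (1 - eps n) * (1 - eps n) * 1 +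
      (1 - eps n) * (1 - eps n) * (1 - eps n) + (1 - eps n) * (1 - eps n) * (1 - eps n) -
      (1 - eps n) * 1 * (1 - eps n) = eps n * eps n * (3 - 2 * eps n)
    ring
  rw [this]
  rw [Real.log_mul (by positivity) (by nlinarith : (3:ℝ) - 2*eps n ≠ 0),
    Real.log_mul he.ne' he.ne', log_eps]
  ring

-- U generator family
noncomputable def tv (n : ℕ) : ℝ := Real.exp (-((n:ℝ)+5))

lemma tv_pos (n : ℕ) : 0 < tv n := Real.exp_pos _
lemma tv_lt (n : ℕ) : tv n < 1/32 := by
  have h5 : tv n ≤ Real.exp (-5 : ℝ) := by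
    rw [tv]
    apply Real.exp_le_exp.2
    have : (0:ℝ) ≤ (n:ℝ) := Nat.cast_nonneg n
    linarith
  have h1 : (2.7:ℝ) < Real.exp 1 := by
    have := Real.exp_one_gt_d9
    linarith
  have hp : (2.7:ℝ)^(5:ℕ) < Real.exp 1 ^ (5:ℕ) := by
    gcongr
  have he5 : (32:ℝ) < Real.exp 1 ^ (5:ℕ) := by nlinarith [hp]
  have h32 : (32:ℝ) < Real.exp (5:ℝ) := by
    have h' : Real.exp 1 ^ (5:ℕ) = Real.exp ((5:ℕ):ℝ) := Real.exp_one_pow 5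
    have h'' : Real.exp ((5:ℕ):ℝ) = Real.exp (5:ℝ) := by norm_num
    rw [h', h''] at he5
    exact he5
  have hinv : Real.exp (-5:ℝ) < 1/32 := by
    rw [Real.exp_neg]
    have := inv_strictAnti₀ (by norm_num : (0:ℝ) < 32) h32
    rw [one_div]
    exact this
  linarith

noncomputable def Um (n : ℕ) : Matrix (Fin 3) (Fin 3) ℝ :=
  ![![2 + tv n, 1, -1], ![1, 2 + tv n, 1], ![-1, 1, 2 + tv n]]

lemma Um_symm (n : ℕ) : (Um n).IsSymm := by
  show (Um n)ᵀ = Um n; ext i j; fin_cases i <;> fin_cases j <;> rfl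

lemma Um_pd (n : ℕ) : (Um n).PosDef := by
  refine Matrix.PosDef.of_dotProduct_mulVec_pos (Um_symm n) fun x hx => ?_
  rw [quad]
  have h := pos_comp x hx
  have ht := tv_pos n
  show (0:ℝ) < x 0 * ((2 + tv n) * x 0 + 1 * x 1 + (-1) * x 2) +
      x 1 * (1 * x 0 + (2 + tv n) * x 1 + 1 * x 2) +
      x 2 * ((-1) * x 0 + 1 * x 1 + (2 + tv n) * x 2)
  nlinarith [sq_nonneg (x 0 + x 1), sq_nonneg (x 1 + x 2), sq_nonneg (x 0 - x 2),
    mul_pos ht h]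

lemma ldv_Um_t0 (n : ℕ) : ldv (Um n) t0 = Real.log (2 + tv n) := by
  rw [ldv_t0]; norm_num [Um]
lemma ldv_Um_t1 (n : ℕ) : ldv (Um n) t1 = Real.log (2 + tv n) := by
  rw [ldv_t1]; norm_num [Um]
lemma ldv_Um_t2 (n : ℕ) : ldv (Um n) t2 = Real.log (2 + tv n) := by
  rw [ldv_t2]; norm_num [Um, Matrix.cons_val_two, Matrix.tail_cons, Matrix.head_cons]

lemma ldv_Um_t01 (n : ℕ) : ldv (Um n) t01 = Real.log ((2 + tv n)*(2 + tv n) - 1) := by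
  rw [ldv_t01]
  have : Um n 0 0 * Um n 1 1 - Um n 0 1 * Um n 1 0 = (2 + tv n)*(2 + tv n) - 1 := by
    show (2 + tv n) * (2 + tv n) - (1:ℝ) * 1 = (2 + tv n)*(2 + tv n) - 1
    ring
  rw [this]
lemma ldv_Um_t02 (n : ℕ) : ldv (Um n) t02 = Real.log ((2 + tv n)*(2 + tv n) - 1) := by
  rw [ldv_t02]
  have : Um n 0 0 * Um n 2 2 - Um n 0 2 * Um n 2 0 = (2 + tv n)*(2 + tv n) - 1 := by
    show (2 + tv n) * (2 + tv n) - (-1:ℝ) * (-1) = (2 + tv n)*(2 + tv n) - 1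
    ring
  rw [this]
lemma ldv_Um_t12 (n : ℕ) : ldv (Um n) t12 = Real.log ((2 + tv n)*(2 + tv n) - 1) := by
  rw [ldv_t12]
  have : Um n 1 1 * Um n 2 2 - Um n 1 2 * Um n 2 1 = (2 + tv n)*(2 + tv n) - 1 := by
    show (2 + tv n) * (2 + tv n) - (1:ℝ) * 1 = (2 + tv n)*(2 + tv n) - 1
    ring
  rw [this]

noncomputable def den (n : ℕ) : ℝ := ((n:ℝ)+5) - 2 * Real.log (tv n + 3)

lemma log_tv3_lt (n : ℕ) : Real.log (tv n + 3) < 2 := by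
  have ht := tv_pos n
  have h1 : tv n + 3 < Real.exp 2 := by
    have h2 : (2.7:ℝ) < Real.exp 1 := by have := Real.exp_one_gt_d9; linarith
    have h3 : (7:ℝ) < Real.exp 1 * Real.exp 1 := by nlinarith
    rw [show (2:ℝ) = 1 + 1 from by norm_num, Real.exp_add]
    have := tv_lt n
    linarith
  calc Real.log (tv n + 3) < Real.log (Real.exp 2) :=
        Real.log_lt_log (by linarith) h1
    _ = 2 := Real.log_exp 2

lemma den_pos (n : ℕ) : 0 < den n := by
  have h := log_tv3_lt n
  have hn : (0:ℝ) ≤ (n:ℝ) := Nat.cast_nonneg n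
  rw [den]
  linarith

lemma ldv_Um_t012 (n : ℕ) : ldv (Um n) t012 = -(den n) := by
  rw [ldv_t012]
  have ht := tv_pos n
  have : Um n 0 0 * Um n 1 1 * Um n 2 2 - Um n 0 0 * Um n 1 2 * Um n 2 1 -
      Um n 0 1 * Um n 1 0 * Um n 2 2 + Um n 0 1 * Um n 1 2 * Um n 2 0 +
      Um n 0 2 * Um n 1 0 * Um n 2 1 - Um n 0 2 * Um n 1 1 * Um n 2 0
      = tv n * ((tv n + 3) * (tv n + 3)) := by
    show (2 + tv n) * (2 + tv n) * (2 + tv n) - (2 + tv n) * 1 * 1 -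
      (1:ℝ) * 1 * (2 + tv n) + 1 * 1 * (-1) + (-1) * 1 * 1 - (-1) * (2 + tv n) * (-1)
      = tv n * ((tv n + 3) * (tv n + 3))
    ring
  rw [this]
  rw [Real.log_mul ht.ne' (by positivity), Real.log_mul (by positivity) (by positivity)]
  rw [show Real.log (tv n) = -((n:ℝ)+5) from Real.log_exp _]
  rw [den]; ring

end gens

/-! ### Limits -/

section limits

lemma nat_add_tendsto (c : ℝ) : Tendsto (fun n : ℕ => (n:ℝ) + c) atTop atTop :=
  tendsto_atTop_add_const_right _ c tendsto_natCast_atTop_atTop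

lemma eps_tendsto : Tendsto eps atTop (𝓝 0) :=
  Real.tendsto_exp_atBot.comp (tendsto_neg_atTop_atBot.comp (nat_add_tendsto 1))

lemma tv_tendsto : Tendsto tv atTop (𝓝 0) :=
  Real.tendsto_exp_atBot.comp (tendsto_neg_atTop_atBot.comp (nat_add_tendsto 5))

lemma den_tendsto : Tendsto den atTop atTop := by
  have h : Tendsto (fun n : ℕ => ((n:ℝ)+5) + (-(2 * Real.log (tv n + 3)))) atTop atTop := by
    refine tendsto_atTop_add_right_of_le _ (-4 : ℝ) (nat_add_tendsto 5) ?_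
    intro n
    have := log_tv3_lt n
    linarith
  refine h.congr fun n => ?_
  rw [den]; ring

lemma inv_n1_tendsto : Tendsto (fun n : ℕ => ((n:ℝ)+1)⁻¹) atTop (𝓝 0) :=
  tendsto_inv_atTop_zero.comp (nat_add_tendsto 1)

lemma inv_den_tendsto : Tendsto (fun n : ℕ => (den n)⁻¹) atTop (𝓝 0) :=
  tendsto_inv_atTop_zero.comp den_tendsto

lemma Wterm (lamv L : ℝ) (f : ℕ → ℝ) (hf : Tendsto f atTop (𝓝 L)) :
    Tendsto (fun n : ℕ => lamv * ((n:ℝ)+1)⁻¹ * f n) atTop (𝓝 0) := by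
  have := ((tendsto_const_nhds (x := lamv) (f := atTop)).mul inv_n1_tendsto).mul hf
  simpa using this

lemma Uterm (muv L : ℝ) (f : ℕ → ℝ) (hf : Tendsto f atTop (𝓝 L)) :
    Tendsto (fun n : ℕ => muv * (den n)⁻¹ * f n) atTop (𝓝 0) := by
  have := ((tendsto_const_nhds (x := muv) (f := atTop)).mul inv_den_tendsto).mul hf
  simpa using this

lemma log2eps_tendsto : Tendsto (fun n => Real.log (2 - eps n)) atTop (𝓝 (Real.log 2)) := by
  have h : Tendsto (fun n => (2:ℝ) - eps n) atTop (𝓝 2) := by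
    have := (tendsto_const_nhds (x := (2:ℝ)) (f := (atTop : Filter ℕ))).sub eps_tendsto
    simpa using this
  exact ((Real.continuousAt_log (by norm_num)).tendsto).comp h

lemma log3eps_tendsto : Tendsto (fun n => Real.log (3 - 2 * eps n)) atTop (𝓝 (Real.log 3)) := by
  have h : Tendsto (fun n => (3:ℝ) - 2 * eps n) atTop (𝓝 3) := by
    have := (tendsto_const_nhds (x := (3:ℝ)) (f := (atTop : Filter ℕ))).sub
      ((tendsto_const_nhds (x := (2:ℝ))).mul eps_tendsto)
    simpa using this
  exact ((Real.continuousAt_log (by norm_num)).tendsto).comp h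

lemma log2tv_tendsto : Tendsto (fun n => Real.log (2 + tv n)) atTop (𝓝 (Real.log 2)) := by
  have h : Tendsto (fun n => (2:ℝ) + tv n) atTop (𝓝 2) := by
    have := (tendsto_const_nhds (x := (2:ℝ)) (f := (atTop : Filter ℕ))).add tv_tendsto
    simpa using this
  exact ((Real.continuousAt_log (by norm_num)).tendsto).comp h

lemma logpair_tv_tendsto :
    Tendsto (fun n => Real.log ((2 + tv n) * (2 + tv n) - 1)) atTop (𝓝 (Real.log 3)) := by
  have h2 : Tendsto (fun n => (2:ℝ) + tv n) atTop (𝓝 2) := by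
    have := (tendsto_const_nhds (x := (2:ℝ)) (f := (atTop : Filter ℕ))).add tv_tendsto
    simpa using this
  have h : Tendsto (fun n => (2 + tv n) * (2 + tv n) - 1) atTop (𝓝 3) := by
    have := (h2.mul h2).sub (tendsto_const_nhds (x := (1:ℝ)) (f := (atTop : Filter ℕ)))
    norm_num at this
    exact this
  exact ((Real.continuousAt_log (by norm_num)).tendsto).comp h

end limits

/-! ### The sequence for the reverse inclusion -/

section reverse

variable (g : σ3 → ℝ)

noncomputable def Ag : ℝ := g t0 + g t1 - g t01
noncomputable def Bg : ℝ := g t0 + g t2 - g t02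
noncomputable def Cg : ℝ := g t1 + g t2 - g t12
noncomputable def ug : ℝ := g t01 + g t02 + g t12 - g t0 - g t1 - g t2 - g t012
noncomputable def lam : ℝ := max (-(ug g)) 0
noncomputable def mu : ℝ := max (ug g) 0
noncomputable def qc : ℝ := (Real.log (4/3))⁻¹

lemma log43_pos : 0 < Real.log (4/3) := Real.log_pos (by norm_num)
lemma qc_nonneg : 0 ≤ qc := inv_nonneg.2 log43_pos.le

lemma mu_sub_lam : mu g - lam g = ug g := by
  rcases le_total 0 (ug g) with h | h
  · rw [mu, lam, max_eq_left h, max_eq_right (by linarith)]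
    ring
  · rw [mu, lam, max_eq_right h, max_eq_left (by linarith)]
    ring

lemma qlog : ∀ x : ℝ, (x * qc) * Real.log (3/4) = -x := by
  intro x
  have h : Real.log (3/4) = -Real.log (4/3) := by
    rw [show (3/4:ℝ) = (4/3)⁻¹ from by norm_num, Real.log_inv]
  rw [h, qc]
  field_simp

noncomputable def cv (n : ℕ) : Fin 6 → ℝ :=
  ![1, (Ag g - lam g) * qc, (Bg g - lam g) * qc, (Cg g - lam g) * qc,
    lam g * ((n:ℝ)+1)⁻¹, mu g * (den n)⁻¹]

noncomputable def vv (n : ℕ) : Fin 6 → (σ3 → ℝ) :=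
  ![ldv (Dm (g t0) (g t1) (g t2)), ldv Pm01, ldv Pm02, ldv Pm12, ldv (Wm n), ldv (Um n)]

noncomputable def zf (n : ℕ) : σ3 → ℝ := ∑ i, cv g n i • vv g n i

lemma zf_apply (n : ℕ) (s : σ3) : zf g n s =
    1 * ldv (Dm (g t0) (g t1) (g t2)) s + ((Ag g - lam g) * qc) * ldv Pm01 s +
    ((Bg g - lam g) * qc) * ldv Pm02 s + ((Cg g - lam g) * qc) * ldv Pm12 s +
    (lam g * ((n:ℝ)+1)⁻¹) * ldv (Wm n) s + (mu g * (den n)⁻¹) * ldv (Um n) s := by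
  rw [zf, Fin.sum_univ_six]
  rfl

lemma zf_tendsto : Tendsto (zf g) atTop (𝓝 g) := by
  rw [tendsto_pi_nhds]
  intro s
  rcases canon s with rfl | rfl | rfl | rfl | rfl | rfl | rfl
  · -- t0
    have hterm : ∀ n, zf g n t0 = g t0 + (mu g * (den n)⁻¹ * Real.log (2 + tv n)) := by
      intro n
      rw [zf_apply, ldv_Dm_t0, ldv_Pm01_t0, ldv_Pm02_t0, ldv_Pm12_t0, ldv_Wm_t0, ldv_Um_t0]
      ring
    have h := (tendsto_const_nhds (x := g t0) (f := (atTop : Filter ℕ))).add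
      (Uterm (mu g) _ _ log2tv_tendsto)
    rw [add_zero] at h
    exact h.congr fun n => (hterm n).symm
  · -- t1
    have hterm : ∀ n, zf g n t1 = g t1 + (mu g * (den n)⁻¹ * Real.log (2 + tv n)) := by
      intro n
      rw [zf_apply, ldv_Dm_t1, ldv_Pm01_t1, ldv_Pm02_t1, ldv_Pm12_t1, ldv_Wm_t1, ldv_Um_t1]
      ring
    have h := (tendsto_const_nhds (x := g t1) (f := (atTop : Filter ℕ))).add
      (Uterm (mu g) _ _ log2tv_tendsto)
    rw [add_zero] at h
    exact h.congr fun n => (hterm n).symm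
  · -- t2
    have hterm : ∀ n, zf g n t2 = g t2 + (mu g * (den n)⁻¹ * Real.log (2 + tv n)) := by
      intro n
      rw [zf_apply, ldv_Dm_t2, ldv_Pm01_t2, ldv_Pm02_t2, ldv_Pm12_t2, ldv_Wm_t2, ldv_Um_t2]
      ring
    have h := (tendsto_const_nhds (x := g t2) (f := (atTop : Filter ℕ))).add
      (Uterm (mu g) _ _ log2tv_tendsto)
    rw [add_zero] at h
    exact h.congr fun n => (hterm n).symm
  · -- t01
    have hterm : ∀ n, zf g n t01 = g t01 +
        (lam g * ((n:ℝ)+1)⁻¹ * Real.log (2 - eps n)) +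
        (mu g * (den n)⁻¹ * Real.log ((2 + tv n) * (2 + tv n) - 1)) := by
      intro n
      rw [zf_apply, ldv_Dm_t01, ldv_Pm01_t01, ldv_Pm02_t01, ldv_Pm12_t01, ldv_Wm_t01,
        ldv_Um_t01]
      have hq := qlog (Ag g - lam g)
      have hn : ((n:ℝ)+1) ≠ 0 := by positivity
      have hinv : lam g * ((n:ℝ)+1)⁻¹ * (-((n:ℝ)+1) + Real.log (2 - eps n)) =
          -(lam g) + lam g * ((n:ℝ)+1)⁻¹ * Real.log (2 - eps n) := by
        field_simp
      rw [hinv]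
      have hA : (1:ℝ) * (g t0 + g t1) + (Ag g - lam g) * qc * Real.log (3/4) +
          ((Bg g - lam g) * qc) * 0 + ((Cg g - lam g) * qc) * 0 = g t01 + lam g := by
        rw [hq]; rw [Ag]; ring
      nlinarith [hA]
    have h := ((tendsto_const_nhds (x := g t01) (f := (atTop : Filter ℕ))).add
      (Wterm (lam g) _ _ log2eps_tendsto)).add
      (Uterm (mu g) _ _ logpair_tv_tendsto)
    rw [add_zero, add_zero] at h
    exact h.congr fun n => (hterm n).symm
  · -- t02
    have hterm : ∀ n, zf g n t02 = g t02 +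
        (lam g * ((n:ℝ)+1)⁻¹ * Real.log (2 - eps n)) +
        (mu g * (den n)⁻¹ * Real.log ((2 + tv n) * (2 + tv n) - 1)) := by
      intro n
      rw [zf_apply, ldv_Dm_t02, ldv_Pm01_t02, ldv_Pm02_t02, ldv_Pm12_t02, ldv_Wm_t02,
        ldv_Um_t02]
      have hq := qlog (Bg g - lam g)
      have hn : ((n:ℝ)+1) ≠ 0 := by positivity
      have hinv : lam g * ((n:ℝ)+1)⁻¹ * (-((n:ℝ)+1) + Real.log (2 - eps n)) =
          -(lam g) + lam g * ((n:ℝ)+1)⁻¹ * Real.log (2 - eps n) := by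
        field_simp
      rw [hinv]
      have hA : (1:ℝ) * (g t0 + g t2) + ((Ag g - lam g) * qc) * 0 +
          (Bg g - lam g) * qc * Real.log (3/4) +
          ((Cg g - lam g) * qc) * 0 = g t02 + lam g := by
        rw [hq]; rw [Bg]; ring
      nlinarith [hA]
    have h := ((tendsto_const_nhds (x := g t02) (f := (atTop : Filter ℕ))).add
      (Wterm (lam g) _ _ log2eps_tendsto)).add
      (Uterm (mu g) _ _ logpair_tv_tendsto)
    rw [add_zero, add_zero] at h
    exact h.congr fun n => (hterm n).symm
  · -- t12
    have hterm : ∀ n, zf g n t12 = g t12 +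
        (lam g * ((n:ℝ)+1)⁻¹ * Real.log (2 - eps n)) +
        (mu g * (den n)⁻¹ * Real.log ((2 + tv n) * (2 + tv n) - 1)) := by
      intro n
      rw [zf_apply, ldv_Dm_t12, ldv_Pm01_t12, ldv_Pm02_t12, ldv_Pm12_t12, ldv_Wm_t12,
        ldv_Um_t12]
      have hq := qlog (Cg g - lam g)
      have hn : ((n:ℝ)+1) ≠ 0 := by positivity
      have hinv : lam g * ((n:ℝ)+1)⁻¹ * (-((n:ℝ)+1) + Real.log (2 - eps n)) =
          -(lam g) + lam g * ((n:ℝ)+1)⁻¹ * Real.log (2 - eps n) := by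
        field_simp
      rw [hinv]
      have hA : (1:ℝ) * (g t1 + g t2) + ((Ag g - lam g) * qc) * 0 +
          ((Bg g - lam g) * qc) * 0 +
          (Cg g - lam g) * qc * Real.log (3/4) = g t12 + lam g := by
        rw [hq]; rw [Cg]; ring
      nlinarith [hA]
    have h := ((tendsto_const_nhds (x := g t12) (f := (atTop : Filter ℕ))).add
      (Wterm (lam g) _ _ log2eps_tendsto)).add
      (Uterm (mu g) _ _ logpair_tv_tendsto)
    rw [add_zero, add_zero] at h
    exact h.congr fun n => (hterm n).symm
  · -- t012
    have hterm : ∀ n, zf g n t012 = g t012 +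
        (lam g * ((n:ℝ)+1)⁻¹ * Real.log (3 - 2 * eps n)) := by
      intro n
      rw [zf_apply, ldv_Dm_t012, ldv_Pm01_t012, ldv_Pm02_t012, ldv_Pm12_t012, ldv_Wm_t012,
        ldv_Um_t012]
      have hqA := qlog (Ag g - lam g)
      have hqB := qlog (Bg g - lam g)
      have hqC := qlog (Cg g - lam g)
      have hn : ((n:ℝ)+1) ≠ 0 := by positivity
      have hdn : den n ≠ 0 := (den_pos n).ne'
      have hinv : lam g * ((n:ℝ)+1)⁻¹ * (-2*((n:ℝ)+1) + Real.log (3 - 2 * eps n)) =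
          -(2 * lam g) + lam g * ((n:ℝ)+1)⁻¹ * Real.log (3 - 2 * eps n) := by
        field_simp
      have hU : mu g * (den n)⁻¹ * (-(den n)) = -(mu g) := by
        field_simp
      rw [hinv, hU]
      have hml : mu g = lam g + ug g := by
        have := mu_sub_lam g
        linarith
      have hA : (1:ℝ) * (g t0 + g t1 + g t2) + (Ag g - lam g) * qc * Real.log (3/4)
          + (Bg g - lam g) * qc * Real.log (3/4) + (Cg g - lam g) * qc * Real.log (3/4)
          = g t012 + 2 * lam g + mu g := by
        rw [hqA, hqB, hqC, hml, Ag, Bg, Cg, ug]; ring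
      nlinarith [hA]
    have h := (tendsto_const_nhds (x := g t012) (f := (atTop : Filter ℕ))).add
      (Wterm (lam g) _ _ log3eps_tendsto)
    rw [add_zero] at h
    exact h.congr fun n => (hterm n).symm

end reverse

/-! ### Main sets -/

def GsC : Set (σ3 → ℝ) :=
  {g | ∃ R : Matrix (Fin 3) (Fin 3) ℝ, R.IsSymm ∧ R.PosDef ∧
    ∀ s : σ3, g s = Real.log
      ((R.submatrix (fun i : {x // x ∈ s.1} => (i : Fin 3))
                    (fun i : {x // x ∈ s.1} => (i : Fin 3))).det)}

def coneC : Set (σ3 → ℝ) :=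
  {g | ∃ (k : ℕ) (c : Fin k → ℝ) (v : Fin k → (σ3 → ℝ)),
    (∀ i, 0 ≤ c i) ∧ (∀ i, v i ∈ GsC) ∧ g = ∑ i, c i • v i}

lemma cone_sub_P : coneC ⊆ {g | P g} := by
  rintro g ⟨k, c, v, hc, hv, rfl⟩
  have hPv : ∀ i, P (v i) := by
    intro i
    obtain ⟨R, hs, hpd, hval⟩ := hv i
    have hvi : v i = ldv R := funext fun s => hval s
    rw [hvi]
    exact P_ldv R hs hpd
  exact ⟨sumA c v hc _ _ _ (fun i => (hPv i).1),
    sumA c v hc _ _ _ (fun i => (hPv i).2.1),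
    sumA c v hc _ _ _ (fun i => (hPv i).2.2.1),
    sumB c v hc _ _ _ _ (fun i => (hPv i).2.2.2.1),
    sumB c v hc _ _ _ _ (fun i => (hPv i).2.2.2.2.1),
    sumB c v hc _ _ _ _ (fun i => (hPv i).2.2.2.2.2)⟩

lemma P_mem_closure {g : σ3 → ℝ} (hg : P g) : g ∈ closure coneC := by
  have hA0 : 0 ≤ Ag g := by rw [Ag]; linarith [hg.1]
  have hB0 : 0 ≤ Bg g := by rw [Bg]; linarith [hg.2.1]
  have hC0 : 0 ≤ Cg g := by rw [Cg]; linarith [hg.2.2.1]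
  have hAu : 0 ≤ Ag g + ug g := by rw [Ag, ug]; linarith [hg.2.2.2.2.2]
  have hBu : 0 ≤ Bg g + ug g := by rw [Bg, ug]; linarith [hg.2.2.2.2.1]
  have hCu : 0 ≤ Cg g + ug g := by rw [Cg, ug]; linarith [hg.2.2.2.1]
  have hlamA : lam g ≤ Ag g := max_le (by linarith) hA0
  have hlamB : lam g ≤ Bg g := max_le (by linarith) hB0
  have hlamC : lam g ≤ Cg g := max_le (by linarith) hC0
  have hlam0 : 0 ≤ lam g := le_max_right _ _
  have hmu0 : 0 ≤ mu g := le_max_right _ _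
  refine mem_closure_of_tendsto (zf_tendsto g) (Filter.Eventually.of_forall fun n => ?_)
  refine ⟨6, cv g n, vv g n, ?_, ?_, rfl⟩
  · intro i
    fin_cases i
    · exact zero_le_one
    · exact mul_nonneg (by linarith) qc_nonneg
    · exact mul_nonneg (by linarith) qc_nonneg
    · exact mul_nonneg (by linarith) qc_nonneg
    · exact mul_nonneg hlam0 (inv_nonneg.2 (by positivity))
    · exact mul_nonneg hmu0 (inv_nonneg.2 (den_pos n).le)
  · intro i
    fin_cases i
    · exact ⟨Dm (g t0) (g t1) (g t2), Dm_symm _ _ _, Dm_pd _ _ _, fun s => rfl⟩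
    · exact ⟨Pm01, Pm01_symm, Pm01_pd, fun s => rfl⟩
    · exact ⟨Pm02, Pm02_symm, Pm02_pd, fun s => rfl⟩
    · exact ⟨Pm12, Pm12_symm, Pm12_pd, fun s => rfl⟩
    · exact ⟨Wm n, Wm_symm n, Wm_pd n, fun s => rfl⟩
    · exact ⟨Um n, Um_symm n, Um_pd n, fun s => rfl⟩

/-! ### Relating P to the target set -/

def RHSset : Set (σ3 → ℝ) :=
  {g | ∀ i j k : Fin 3, i ≠ j → j ≠ k → i ≠ k →
    g ⟨{i, j}, Finset.insert_nonempty i {j}⟩ ≤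
        g ⟨{i}, Finset.singleton_nonempty i⟩ + g ⟨{j}, Finset.singleton_nonempty j⟩ ∧
    g ⟨{0, 1, 2}, Finset.insert_nonempty 0 {1, 2}⟩ + g ⟨{k}, Finset.singleton_nonempty k⟩ ≤
      g ⟨{i, k}, Finset.insert_nonempty i {k}⟩ + g ⟨{j, k}, Finset.insert_nonempty j {k}⟩}

lemma fin3cases : ∀ m : Fin 3, m = 0 ∨ m = 1 ∨ m = 2 := by decide

lemma P_iff_RHS (g : σ3 → ℝ) : P g ↔ g ∈ RHSset := by
  have E0 : g ⟨{0}, Finset.singleton_nonempty 0⟩ = g t0 := rfl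
  have E1 : g ⟨{1}, Finset.singleton_nonempty 1⟩ = g t1 := rfl
  have E2 : g ⟨{2}, Finset.singleton_nonempty 2⟩ = g t2 := rfl
  have E01 : g ⟨{0, 1}, Finset.insert_nonempty 0 {1}⟩ = g t01 := rfl
  have E02 : g ⟨{0, 2}, Finset.insert_nonempty 0 {2}⟩ = g t02 := rfl
  have E12 : g ⟨{1, 2}, Finset.insert_nonempty 1 {2}⟩ = g t12 := rfl
  have E10 : g ⟨{1, 0}, Finset.insert_nonempty 1 {0}⟩ = g t01 :=
    congrArg g (Subtype.ext (by decide))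
  have E20 : g ⟨{2, 0}, Finset.insert_nonempty 2 {0}⟩ = g t02 :=
    congrArg g (Subtype.ext (by decide))
  have E21 : g ⟨{2, 1}, Finset.insert_nonempty 2 {1}⟩ = g t12 :=
    congrArg g (Subtype.ext (by decide))
  have E012 : g ⟨{0, 1, 2}, Finset.insert_nonempty 0 {1, 2}⟩ = g t012 := rfl
  constructor
  · rintro ⟨p1, p2, p3, p4, p5, p6⟩
    intro i j k hij hjk hik
    rcases fin3cases i with rfl | rfl | rfl <;> rcases fin3cases j with rfl | rfl | rfl <;>
      rcases fin3cases k with rfl | rfl | rfl <;>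
      first
        | (exact absurd rfl hij)
        | (exact absurd rfl hjk)
        | (exact absurd rfl hik)
        | (constructor <;> linarith [E0, E1, E2, E01, E02, E12, E10, E20, E21, E012])
  · intro h
    have h1 := h 0 1 2 (by decide) (by decide) (by decide)
    have h2 := h 0 2 1 (by decide) (by decide) (by decide)
    have h3 := h 1 2 0 (by decide) (by decide) (by decide)
    refine ⟨?_, ?_, ?_, ?_, ?_, ?_⟩
    · linarith [h1.1, E0, E1, E01]
    · linarith [h2.1, E0, E2, E02]
    · linarith [h3.1, E1, E2, E12]
    · linarith [h3.2, E0, E10, E20, E012]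
    · linarith [h2.2, E1, E01, E21, E012]
    · linarith [h1.2, E2, E02, E12, E012]

theorem mainS6 : closure coneC = RHSset := by
  apply subset_antisymm
  · intro x hx
    have hP : P x := closure_minimal cone_sub_P isClosed_P hx
    exact (P_iff_RHS x).1 hP
  · intro x hx
    exact P_mem_closure ((P_iff_RHS x).2 hx)

end S6

open Matrix

/-- The closure of the convex cone generated by the entropy region of 3 scalar-valued jointly
Gaussian random variables equals the entropy region of 3 arbitrary continuous random
variables, i.e. the set of vectors satisfying `g_{ij} ≤ g_i + g_j` and
`g_{123} + g_k ≤ g_{ik} + g_{jk}` for all distinct `i, j, k`. -/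
theorem stmt_6
    (Gs : Set ({s : Finset (Fin 3) // s.Nonempty} → ℝ))
    (hGs : Gs = {g | ∃ R : Matrix (Fin 3) (Fin 3) ℝ, R.IsSymm ∧ R.PosDef ∧
      ∀ s : {s : Finset (Fin 3) // s.Nonempty},
        g s = Real.log
          (R.submatrix (fun i : {x // x ∈ s.1} => (i : Fin 3))
                       (fun i : {x // x ∈ s.1} => (i : Fin 3))).det})
    (cone : Set ({s : Finset (Fin 3) // s.Nonempty} → ℝ))
    (hcone : cone = {g | ∃ (k : ℕ) (c : Fin k → ℝ)
      (v : Fin k → ({s : Finset (Fin 3) // s.Nonempty} → ℝ)),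
        (∀ i, 0 ≤ c i) ∧ (∀ i, v i ∈ Gs) ∧ g = ∑ i, c i • v i}) :
    closure cone =
      {g | ∀ i j k : Fin 3, i ≠ j → j ≠ k → i ≠ k →
        g ⟨{i, j}, Finset.insert_nonempty i {j}⟩ ≤
            g ⟨{i}, Finset.singleton_nonempty i⟩ + g ⟨{j}, Finset.singleton_nonempty j⟩ ∧
        g ⟨{0, 1, 2}, Finset.insert_nonempty 0 {1, 2}⟩ + g ⟨{k}, Finset.singleton_nonempty k⟩ ≤
          g ⟨{i, k}, Finset.insert_nonempty i {k}⟩ + g ⟨{j, k}, Finset.insert_nonempty j {k}⟩} := by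
  subst hGs
  subst hcone
  exact S6.mainS6
end

section
/- Let T be a positive integer, let Φ₁₂, Φ₁₃, Φ₂₃ be real orthogonal T×T matrices, and let α₁₁, α₂₂, α₃₃, α₁₂, α₁₃, α₂₃ be real numbers with α₁₁ ≠ 0. Let R be the symmetric 3T×3T block matrix with diagonal blocks α₁₁I_T, α₂₂I_T, α₃₃I_T, and off-diagonal blocks R₁₂ = α₁₂Φ₁₂, R₁₃ = α₁₃Φ₁₃, R₂₃ = α₂₃Φ₂₃ (and their transposes below the diagonal). Then det R = det( (α₁₁α₂₂α₃₃ − α₁₁α₂₃² − α₂₂α₁₃² − α₃₃α₁₂²)·I_T + α₁₂α₁₃α₂₃·(Φ + Φᵗ) ), where Φ = Φ₁₃ᵗ Φ₁₂ Φ₂₃. -/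
open Matrix

private lemma fromBlocks_sub' {T : ℕ} (A B C D A' B' C' D' : Matrix (Fin T) (Fin T) ℝ) :
    fromBlocks A B C D - fromBlocks A' B' C' D' =
      fromBlocks (A - A') (B - B') (C - C') (D - D') := by
  ext (i | i) (j | j) <;> rfl

private lemma det_fromBlocks_scalar₂₂ {T : ℕ} (A B C : Matrix (Fin T) (Fin T) ℝ) (d : ℝ) :
    (fromBlocks A B C (d • (1 : Matrix (Fin T) (Fin T) ℝ))).det = (d • A - B * C).det := by
  have key : ∀ d : ℝ, d ≠ 0 →
      (fromBlocks A B C (d • (1 : Matrix (Fin T) (Fin T) ℝ))).det = (d • A - B * C).det := by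
    intro d hd
    have hdet : IsUnit (d • (1 : Matrix (Fin T) (Fin T) ℝ)).det := by
      rw [det_smul, det_one, mul_one]
      exact isUnit_iff_ne_zero.mpr (pow_ne_zero _ hd)
    haveI := (d • (1 : Matrix (Fin T) (Fin T) ℝ)).invertibleOfIsUnitDet hdet
    have hinv : ⅟(d • (1 : Matrix (Fin T) (Fin T) ℝ)) = d⁻¹ • 1 :=
      invOf_eq_right_inv (by
        rw [smul_mul_smul_comm, mul_one, mul_inv_cancel₀ hd, one_smul])
    rw [det_fromBlocks₂₂, hinv]
    have h1 : A - B * (d⁻¹ • (1 : Matrix (Fin T) (Fin T) ℝ)) * C = A - d⁻¹ • (B * C) := by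
      rw [Matrix.mul_smul, Matrix.mul_one, Matrix.smul_mul]
    have h2 : d • A - B * C = d • (A - d⁻¹ • (B * C)) := by
      rw [smul_sub, smul_smul, mul_inv_cancel₀ hd, one_smul]
    rw [h1, h2, det_smul, det_smul, det_one, mul_one]
  have hc1 : Continuous fun d : ℝ =>
      (fromBlocks A B C (d • (1 : Matrix (Fin T) (Fin T) ℝ))).det :=
    (Continuous.matrix_fromBlocks continuous_const continuous_const continuous_const
      (continuous_id.smul continuous_const)).matrix_det
  have hc2 : Continuous fun d : ℝ => (d • A - B * C).det :=
    ((continuous_id.smul continuous_const).sub continuous_const).matrix_det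
  have heq : (fun d : ℝ =>
      (fromBlocks A B C (d • (1 : Matrix (Fin T) (Fin T) ℝ))).det) =
      fun d : ℝ => (d • A - B * C).det := by
    apply hc1.ext_on (dense_compl_singleton (0 : ℝ)) hc2
    intro x hx
    exact key x hx
  exact congrFun heq d

/-- Determinant of the 3×3 block matrix with scalar diagonal blocks and scaled-orthogonal
off-diagonal blocks, expressed as a `T × T` determinant. -/
theorem stmt_7 (T : ℕ) (hT : 0 < T)
    (Φ₁₂ Φ₁₃ Φ₂₃ : Matrix (Fin T) (Fin T) ℝ)
    (h₁₂ : Φ₁₂ᵀ * Φ₁₂ = 1) (h₁₃ : Φ₁₃ᵀ * Φ₁₃ = 1) (h₂₃ : Φ₂₃ᵀ * Φ₂₃ = 1)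
    (α₁₁ α₂₂ α₃₃ α₁₂ α₁₃ α₂₃ : ℝ) (hα : α₁₁ ≠ 0)
    (R : Matrix (Fin 3 × Fin T) (Fin 3 × Fin T) ℝ)
    (hR : R = Matrix.of fun p q : Fin 3 × Fin T =>
      (![![α₁₁ • (1 : Matrix (Fin T) (Fin T) ℝ), α₁₂ • Φ₁₂, α₁₃ • Φ₁₃],
         ![α₁₂ • Φ₁₂ᵀ, α₂₂ • (1 : Matrix (Fin T) (Fin T) ℝ), α₂₃ • Φ₂₃],
         ![α₁₃ • Φ₁₃ᵀ, α₂₃ • Φ₂₃ᵀ, α₃₃ • (1 : Matrix (Fin T) (Fin T) ℝ)]]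
        : Fin 3 → Fin 3 → Matrix (Fin T) (Fin T) ℝ) p.1 q.1 p.2 q.2) :
    R.det =
      ((α₁₁ * α₂₂ * α₃₃ - α₁₁ * α₂₃ ^ 2 - α₂₂ * α₁₃ ^ 2 - α₃₃ * α₁₂ ^ 2) •
          (1 : Matrix (Fin T) (Fin T) ℝ) +
        (α₁₂ * α₁₃ * α₂₃) • (Φ₁₃ᵀ * Φ₁₂ * Φ₂₃ + (Φ₁₃ᵀ * Φ₁₂ * Φ₂₃)ᵀ)).det := by
  -- reindexing equivalence
  have h₂₃' : Φ₂₃ * Φ₂₃ᵀ = 1 := mul_eq_one_comm.mp h₂₃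
  have h₁₃' : Φ₁₃ * Φ₁₃ᵀ = 1 := mul_eq_one_comm.mp h₁₃
  let e : (Fin T ⊕ (Fin T ⊕ Fin T)) ≃ Fin 3 × Fin T :=
  { toFun := Sum.elim (fun t => (0, t)) (Sum.elim (fun t => (1, t)) fun t => (2, t)),
    invFun := fun p => ![Sum.inl p.2, Sum.inr (Sum.inl p.2), Sum.inr (Sum.inr p.2)] p.1,
    left_inv := by rintro (t | t | t) <;> rfl,
    right_inv := by rintro ⟨i, t⟩; fin_cases i <;> rfl }
  rw [← det_submatrix_equiv_self e R]
  have hsub : R.submatrix e e = fromBlocks (α₁₁ • 1)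
      (fromCols (α₁₂ • Φ₁₂) (α₁₃ • Φ₁₃))
      (fromRows (α₁₂ • Φ₁₂ᵀ) (α₁₃ • Φ₁₃ᵀ))
      (fromBlocks (α₂₂ • 1) (α₂₃ • Φ₂₃) (α₂₃ • Φ₂₃ᵀ) (α₃₃ • 1)) := by
    subst hR
    ext (i | i | i) (j | j | j) <;> rfl
  rw [hsub]
  have hdetA : IsUnit (α₁₁ • (1 : Matrix (Fin T) (Fin T) ℝ)).det := by
    rw [det_smul, det_one, mul_one]
    exact isUnit_iff_ne_zero.mpr (pow_ne_zero _ hα)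
  haveI := (α₁₁ • (1 : Matrix (Fin T) (Fin T) ℝ)).invertibleOfIsUnitDet hdetA
  have hinv : ⅟(α₁₁ • (1 : Matrix (Fin T) (Fin T) ℝ)) = α₁₁⁻¹ • 1 :=
    invOf_eq_right_inv (by
      rw [smul_mul_smul_comm, mul_one, mul_inv_cancel₀ hα, one_smul])
  rw [det_fromBlocks₁₁, hinv]
  -- compute the Schur complement
  set t : ℝ := α₁₁⁻¹ * (α₁₂ * α₁₃) with ht
  have hCB : fromRows (α₁₂ • Φ₁₂ᵀ) (α₁₃ • Φ₁₃ᵀ) * (α₁₁⁻¹ • (1 : Matrix (Fin T) (Fin T) ℝ)) *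
      fromCols (α₁₂ • Φ₁₂) (α₁₃ • Φ₁₃) =
      fromBlocks ((α₁₁⁻¹ * α₁₂ ^ 2) • (1 : Matrix (Fin T) (Fin T) ℝ)) (t • (Φ₁₂ᵀ * Φ₁₃))
        (t • (Φ₁₃ᵀ * Φ₁₂)) ((α₁₁⁻¹ * α₁₃ ^ 2) • (1 : Matrix (Fin T) (Fin T) ℝ)) := by
    simp only [Matrix.mul_smul, Matrix.mul_one, Matrix.smul_mul]
    rw [fromRows_mul_fromCols, fromBlocks_smul]
    congr 1 <;>
      simp only [Matrix.smul_mul, Matrix.mul_smul, smul_smul, h₁₂, h₁₃] <;> ring_nf <;> (rw [ht]; congr 1; ring)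
  rw [hCB, fromBlocks_sub']
  have e1 : α₂₂ • (1 : Matrix (Fin T) (Fin T) ℝ) - (α₁₁⁻¹ * α₁₂ ^ 2) • 1 =
      (α₂₂ - α₁₁⁻¹ * α₁₂ ^ 2) • 1 := by rw [← sub_smul]
  have e4 : α₃₃ • (1 : Matrix (Fin T) (Fin T) ℝ) - (α₁₁⁻¹ * α₁₃ ^ 2) • 1 =
      (α₃₃ - α₁₁⁻¹ * α₁₃ ^ 2) • 1 := by rw [← sub_smul]
  rw [e1, e4, det_fromBlocks_scalar₂₂]
  -- expand the inner matrix
  set a : ℝ := α₂₂ - α₁₁⁻¹ * α₁₂ ^ 2 with ha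
  set d : ℝ := α₃₃ - α₁₁⁻¹ * α₁₃ ^ 2 with hd
  have hexp : d • (a • (1 : Matrix (Fin T) (Fin T) ℝ)) -
      (α₂₃ • Φ₂₃ - t • (Φ₁₂ᵀ * Φ₁₃)) * (α₂₃ • Φ₂₃ᵀ - t • (Φ₁₃ᵀ * Φ₁₂)) =
      (d * a - α₂₃ ^ 2 - t ^ 2) • 1 + (α₂₃ * t) • (Φ₂₃ * (Φ₁₃ᵀ * Φ₁₂)) +
        (α₂₃ * t) • (Φ₁₂ᵀ * Φ₁₃ * Φ₂₃ᵀ) := by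
    have hmid : Φ₁₂ᵀ * Φ₁₃ * (Φ₁₃ᵀ * Φ₁₂) = 1 := by
      rw [Matrix.mul_assoc, ← Matrix.mul_assoc Φ₁₃, h₁₃', Matrix.one_mul, h₁₂]
    rw [Matrix.sub_mul, Matrix.mul_sub, Matrix.mul_sub]
    simp only [Matrix.smul_mul, Matrix.mul_smul, smul_smul, h₂₃', hmid]
    module
  rw [hexp]
  -- fold the α₁₁ ^ T factor into the determinant
  rw [det_smul, det_one, mul_one, ← det_smul]
  -- scalar bookkeeping
  have hsc : α₁₁ * (α₂₃ * t) = α₁₂ * α₁₃ * α₂₃ := by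
    rw [ht]; field_simp
  have hcc : α₁₁ * (d * a - α₂₃ ^ 2 - t ^ 2) =
      α₁₁ * α₂₂ * α₃₃ - α₁₁ * α₂₃ ^ 2 - α₂₂ * α₁₃ ^ 2 - α₃₃ * α₁₂ ^ 2 := by
    rw [ht, ha, hd]; field_simp; ring
  have k1 : ∀ X : Matrix (Fin T) (Fin T) ℝ, Φ₂₃ * (Φ₂₃ᵀ * X) = X := fun X => by
    rw [← Matrix.mul_assoc, h₂₃', Matrix.one_mul]
  have hfold : α₁₁ • ((d * a - α₂₃ ^ 2 - t ^ 2) • (1 : Matrix (Fin T) (Fin T) ℝ) +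
        (α₂₃ * t) • (Φ₂₃ * (Φ₁₃ᵀ * Φ₁₂)) + (α₂₃ * t) • (Φ₁₂ᵀ * Φ₁₃ * Φ₂₃ᵀ)) =
      Φ₂₃ * ((α₁₁ * α₂₂ * α₃₃ - α₁₁ * α₂₃ ^ 2 - α₂₂ * α₁₃ ^ 2 - α₃₃ * α₁₂ ^ 2) •
          (1 : Matrix (Fin T) (Fin T) ℝ) +
        (α₁₂ * α₁₃ * α₂₃) • (Φ₁₃ᵀ * Φ₁₂ * Φ₂₃ + (Φ₁₃ᵀ * Φ₁₂ * Φ₂₃)ᵀ)) * Φ₂₃ᵀ := by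
    simp only [smul_add, smul_smul, hcc, hsc, Matrix.mul_add, Matrix.add_mul,
      Matrix.mul_smul, Matrix.smul_mul, Matrix.mul_one, Matrix.one_mul,
      transpose_mul, transpose_transpose, Matrix.mul_assoc, k1, h₂₃']
    module
  rw [hfold, det_mul, det_mul]
  have hdet1 : Φ₂₃ᵀ.det * Φ₂₃.det = 1 := by rw [← det_mul, h₂₃, det_one]
  linear_combination ((α₁₁ * α₂₂ * α₃₃ - α₁₁ * α₂₃ ^ 2 - α₂₂ * α₁₃ ^ 2 - α₃₃ * α₁₂ ^ 2) •
          (1 : Matrix (Fin T) (Fin T) ℝ) +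
        (α₁₂ * α₁₃ * α₂₃) • (Φ₁₃ᵀ * Φ₁₂ * Φ₂₃ + (Φ₁₃ᵀ * Φ₁₂ * Φ₂₃)ᵀ)).det * hdet1
end

section
/- Let x₁, x₂, x₃ be real numbers with 0 < x_l ≤ 1 for l = 1,2,3, and let δ > 0. For any permutation (i,j,k) of (1,2,3), the following identity holds: −2 + x₁^δ + x₂^δ + x₃^δ + 2·√((1−x₁^δ)(1−x₂^δ)(1−x₃^δ)) = (x_i x_j)^δ − ( √((1−x_i^δ)(1−x_j^δ)) − √(1−x_k^δ) )². Consequently, −2 + x₁^δ + x₂^δ + x₃^δ + 2·√((1−x₁^δ)(1−x₂^δ)(1−x₃^δ)) ≤ (x_i x_j)^δ for all i ≠ j, and hence f(δ) := (max[0, −2 + Σ_{l=1}^3 x_l^δ + 2√(∏_{l=1}^3 (1−x_l^δ))])^{1/δ} ≤ x_i x_j for all i ≠ j. -/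
open Real Finset

lemma key_sqrt_id (a b c : ℝ) (ha : a ≤ 1) (hb : b ≤ 1) (hc : c ≤ 1) :
    -2 + (a + b + c) + 2 * Real.sqrt ((1-a)*((1-b)*(1-c))) =
      a*b - (Real.sqrt ((1-a)*(1-b)) - Real.sqrt (1-c))^2 := by
  have ha' : 0 ≤ 1 - a := by linarith
  have hb' : 0 ≤ 1 - b := by linarith
  have hc' : 0 ≤ 1 - c := by linarith
  have h1 : Real.sqrt ((1-a)*(1-b)) ^ 2 = (1-a)*(1-b) :=
    Real.sq_sqrt (mul_nonneg ha' hb')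
  have h2 : Real.sqrt (1-c) ^ 2 = 1 - c := Real.sq_sqrt hc'
  have h3 : Real.sqrt ((1-a)*(1-b)) * Real.sqrt (1-c) =
      Real.sqrt ((1-a)*((1-b)*(1-c))) := by
    rw [← Real.sqrt_mul (mul_nonneg ha' hb'), mul_assoc]
  nlinarith [h1, h2, h3]

/-- The algebraic identity behind the upper bound `f(δ) ≤ x_i x_j`, together with the
resulting bounds `e(δ) ≤ (x_i x_j)^δ` and `f(δ) ≤ x_i x_j` for all `i ≠ j`. -/
theorem stmt_9 (x : Fin 3 → ℝ) (hx : ∀ l, 0 < x l ∧ x l ≤ 1) (δ : ℝ) (hδ : 0 < δ)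
    (i j k : Fin 3) (hij : i ≠ j) (hjk : j ≠ k) (hik : i ≠ k)
    (e : ℝ)
    (he : e = -2 + ∑ l, x l ^ δ + 2 * Real.sqrt (∏ l, (1 - x l ^ δ))) :
    e = (x i * x j) ^ δ -
        (Real.sqrt ((1 - x i ^ δ) * (1 - x j ^ δ)) - Real.sqrt (1 - x k ^ δ)) ^ 2 ∧
    e ≤ (x i * x j) ^ δ ∧
    (max 0 e) ^ (1 / δ) ≤ x i * x j := by
  have hle : ∀ l, x l ^ δ ≤ 1 := fun l =>
    Real.rpow_le_one (hx l).1.le (hx l).2 hδ.le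
  have hsum : ∑ l, x l ^ δ = x i ^ δ + (x j ^ δ + x k ^ δ) := by
    fin_cases i <;> fin_cases j <;> fin_cases k <;>
      simp_all [Fin.sum_univ_three] <;> ring
  have hprod : ∏ l, (1 - x l ^ δ) =
      (1 - x i ^ δ) * ((1 - x j ^ δ) * (1 - x k ^ δ)) := by
    fin_cases i <;> fin_cases j <;> fin_cases k <;>
      simp_all [Fin.prod_univ_three] <;> ring
  have hmul : (x i * x j) ^ δ = x i ^ δ * x j ^ δ :=
    Real.mul_rpow (hx i).1.le (hx j).1.le
  have h1 : e = (x i * x j) ^ δ -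
      (Real.sqrt ((1 - x i ^ δ) * (1 - x j ^ δ)) - Real.sqrt (1 - x k ^ δ)) ^ 2 := by
    rw [he, hsum, hprod, hmul]
    have := key_sqrt_id (x i ^ δ) (x j ^ δ) (x k ^ δ) (hle i) (hle j) (hle k)
    linarith [this]
  have h2 : e ≤ (x i * x j) ^ δ := by
    rw [h1]; nlinarith [sq_nonneg (Real.sqrt ((1 - x i ^ δ) * (1 - x j ^ δ)) - Real.sqrt (1 - x k ^ δ))]
  refine ⟨h1, h2, ?_⟩
  have hmax : max 0 e ≤ (x i * x j) ^ δ :=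
    max_le (Real.rpow_nonneg (mul_nonneg (hx i).1.le (hx j).1.le) δ) h2
  calc (max 0 e) ^ (1/δ) ≤ ((x i * x j) ^ δ) ^ (1/δ) :=
        Real.rpow_le_rpow (le_max_left 0 e) hmax (by positivity)
    _ = x i * x j := by
        rw [← Real.rpow_mul (mul_nonneg (hx i).1.le (hx j).1.le),
          mul_one_div_cancel hδ.ne', Real.rpow_one]
end

section
/- Let x₁, x₂, x₃ be real numbers with 0 < x_l ≤ 1 for l = 1,2,3, and define f(δ) = (max[0, −2 + Σ_{l=1}^3 x_l^δ + 2√(∏_{l=1}^3 (1−x_l^δ))])^{1/δ} for δ > 0. Then the supremum of f over δ ∈ (0,∞) equals (x₁x₂x₃)/max(x₁,x₂,x₃), which equals min_{i≠j} x_i x_j. Moreover, if ỹ := (x₁x₂x₃)/max(x₁,x₂,x₃) + 2·max(x₁,x₂,x₃) − (x₁+x₂+x₃) ≤ 0, then already the supremum of f over δ ∈ [1,∞) equals (x₁x₂x₃)/max(x₁,x₂,x₃). -/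
open Real

private lemma aux_le' (a b c : ℝ) (ha1 : a ≤ 1) (hb1 : b ≤ 1) (hc1 : c ≤ 1) :
    -2 + (a + b + c) + 2 * Real.sqrt ((1 - a) * (1 - b) * (1 - c)) ≤ a * b := by
  have h1 : (0:ℝ) ≤ (1 - a) * (1 - b) := mul_nonneg (by linarith) (by linarith)
  rw [Real.sqrt_mul h1]
  set s := Real.sqrt ((1 - a) * (1 - b)) with hs
  set t := Real.sqrt (1 - c) with ht
  have hs2 : s ^ 2 = (1 - a) * (1 - b) := Real.sq_sqrt h1
  have ht2 : t ^ 2 = 1 - c := Real.sq_sqrt (by linarith)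
  nlinarith [sq_nonneg (s - t)]

private lemma aux_eq' (a b c : ℝ) (hc1 : c ≤ 1) (h : 1 - c = (1 - a) * (1 - b)) :
    -2 + (a + b + c) + 2 * Real.sqrt ((1 - a) * (1 - b) * (1 - c)) = a * b := by
  have : (1 - a) * (1 - b) * (1 - c) = (1 - c) ^ 2 := by rw [← h]; ring
  rw [this, Real.sqrt_sq (by linarith)]
  nlinarith [h]

private lemma aux_tie' (a c : ℝ) (ha : 0 ≤ a) (hac : a ≤ c) (hc1 : c ≤ 1) :
    a * c / 2 ≤ -2 + (a + c + c) + 2 * Real.sqrt ((1 - a) * (1 - c) * (1 - c)) := by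
  have ha1 : a ≤ 1 := hac.trans hc1
  have h1 : (0:ℝ) ≤ 1 - a := by linarith
  have hs : Real.sqrt ((1 - a) * (1 - c) * (1 - c)) = (1 - c) * Real.sqrt (1 - a) := by
    rw [show (1 - a) * (1 - c) * (1 - c) = ((1 - c) * Real.sqrt (1 - a)) ^ 2 by
      rw [mul_pow, Real.sq_sqrt h1]; ring]
    exact Real.sqrt_sq (mul_nonneg (by linarith) (Real.sqrt_nonneg _))
  rw [hs]
  set s := Real.sqrt (1 - a) with hsdef
  have hs0 : 0 ≤ s := Real.sqrt_nonneg _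
  have hs2 : s ^ 2 = 1 - a := Real.sq_sqrt h1
  have hs1 : s ≤ 1 := by nlinarith
  nlinarith [mul_nonneg (mul_nonneg (sub_nonneg.2 hs1) hs0) (sub_nonneg.2 hs1),
    mul_nonneg (sub_nonneg.2 hs1) (sub_nonneg.2 hs1), sq_nonneg (1 - s),
    mul_nonneg (mul_nonneg (sub_nonneg.2 hac) hs0) (sub_nonneg.2 hs1)]

private lemma rpow_one_div_self' {x : ℝ} (hx : 0 ≤ x) {δ : ℝ} (hδ : δ ≠ 0) :
    (x ^ δ) ^ (1/δ) = x := by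
  rw [← Real.rpow_mul hx, mul_one_div_cancel hδ, Real.rpow_one]

private lemma one_sub_rpow_le' {x : ℝ} (hx : 0 < x) (δ : ℝ) :
    1 - x ^ δ ≤ δ * (-Real.log x) := by
  have h := Real.add_one_le_exp (δ * Real.log x)
  rw [Real.rpow_def_of_pos hx]; rw [mul_comm] at h; linarith

private lemma one_sub_rpow_ge' {x : ℝ} (hx : 0 < x) (hx1 : x ≤ 1) {δ : ℝ}
    (hδ : 0 < δ) (hδ1 : δ ≤ 1) : δ * (-Real.log x) * x ≤ 1 - x ^ δ := by
  have hxδ : x ^ δ = Real.exp (Real.log x * δ) := Real.rpow_def_of_pos hx δ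
  set t : ℝ := -(Real.log x * δ) with htdef
  have hL := Real.log_nonpos hx.le hx1
  have ht : 0 ≤ t := by nlinarith
  have key : t * Real.exp (-t) ≤ 1 - Real.exp (-t) := by
    have h := Real.add_one_le_exp t
    have hp : 0 < Real.exp (-t) := Real.exp_pos _
    have h2 : (t + 1) * Real.exp (-t) ≤ Real.exp t * Real.exp (-t) :=
      mul_le_mul_of_nonneg_right h hp.le
    rw [← Real.exp_add] at h2
    simp at h2
    nlinarith
  have hex : x ^ δ = Real.exp (-t) := by rw [hxδ, htdef, neg_neg]
  have hxle : x ≤ x ^ δ := by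
    calc x = x ^ (1:ℝ) := (Real.rpow_one x).symm
    _ ≤ x ^ δ := Real.rpow_le_rpow_of_exponent_ge hx hx1 hδ1
  have h3 : t = δ * (-Real.log x) := by rw [htdef]; ring
  have h4 : 0 ≤ δ * (-Real.log x) := by nlinarith
  have h2 : δ * (-Real.log x) * x ≤ t * (x ^ δ) := by
    rw [h3]; exact mul_le_mul_of_nonneg_left hxle h4
  rw [hex] at h2 ⊢; linarith

private lemma cont_rpow_base' {x : ℝ} (hx : 0 < x) : Continuous fun δ : ℝ => x ^ δ := by
  have : (fun δ : ℝ => x ^ δ) = fun δ => Real.exp (Real.log x * δ) :=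
    funext fun δ => Real.rpow_def_of_pos hx δ
  rw [this]
  exact Real.continuous_exp.comp (continuous_const.mul continuous_id)

private lemma strict_exists' (p q M : ℝ) (hp : 0 < p) (hpq : p ≤ q) (hqM : q < M)
    (δ₀ : ℝ) (hδ₀ : 0 < δ₀)
    (hgδ₀ : 0 ≤ p ^ δ₀ + q ^ δ₀ - p ^ δ₀ * q ^ δ₀ - M ^ δ₀) :
    ∃ δ, δ₀ ≤ δ ∧ p ^ δ + q ^ δ - p ^ δ * q ^ δ = M ^ δ := by
  have hq : 0 < q := hp.trans_le hpq
  have hM : 0 < M := hq.trans hqM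
  set g : ℝ → ℝ := fun δ => p ^ δ + q ^ δ - p ^ δ * q ^ δ - M ^ δ with hg
  have hcont : Continuous g := by
    apply Continuous.sub
    apply Continuous.sub
    exact (cont_rpow_base' hp).add (cont_rpow_base' hq)
    exact (cont_rpow_base' hp).mul (cont_rpow_base' hq)
    exact cont_rpow_base' hM
  have hD : 0 < Real.log M - Real.log q := sub_pos.2 (Real.log_lt_log hq hqM)
  set δ₁ : ℝ := max δ₀ (Real.log 2 / (Real.log M - Real.log q)) with hδ₁def
  have hδ₀₁ : δ₀ ≤ δ₁ := le_max_left _ _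
  have hδ₁pos : 0 < δ₁ := hδ₀.trans_le hδ₀₁
  have hhalf : q ^ δ₁ ≤ 2⁻¹ * M ^ δ₁ := by
    have h1 : Real.log 2 ≤ δ₁ * (Real.log M - Real.log q) := by
      have := le_max_right δ₀ (Real.log 2 / (Real.log M - Real.log q))
      rw [div_le_iff₀ hD] at this
      linarith [this]
    have h2 : q ^ δ₁ = Real.exp (Real.log q * δ₁) := Real.rpow_def_of_pos hq _
    have h3 : M ^ δ₁ = Real.exp (Real.log M * δ₁) := Real.rpow_def_of_pos hM _
    rw [h2, h3]
    rw [show (2:ℝ)⁻¹ * Real.exp (Real.log M * δ₁)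
        = Real.exp (Real.log M * δ₁ - Real.log 2) by
      rw [Real.exp_sub, Real.exp_log two_pos]; ring]
    exact Real.exp_le_exp.2 (by nlinarith)
  have hgδ₁ : g δ₁ ≤ 0 := by
    have h1 : p ^ δ₁ ≤ q ^ δ₁ := Real.rpow_le_rpow hp.le hpq hδ₁pos.le
    have h2 : 0 ≤ p ^ δ₁ * q ^ δ₁ := by positivity
    have h3 : 0 < M ^ δ₁ := by positivity
    simp only [hg]
    nlinarith
  have h0mem : (0:ℝ) ∈ Set.Icc (g δ₁) (g δ₀) := ⟨hgδ₁, hgδ₀⟩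
  obtain ⟨δ, hδmem, hδeq⟩ := intermediate_value_Icc' hδ₀₁ hcont.continuousOn h0mem
  exact ⟨δ, hδmem.1, by simp only [hg] at hδeq; linarith⟩

private lemma small_pos' (p q M : ℝ) (hp : 0 < p) (hpq : p ≤ q) (hqM : q ≤ M) (hM1 : M < 1) :
    ∃ δ₀ : ℝ, 0 < δ₀ ∧ δ₀ ≤ 1 ∧ 0 ≤ p ^ δ₀ + q ^ δ₀ - p ^ δ₀ * q ^ δ₀ - M ^ δ₀ := by
  have hq : 0 < q := hp.trans_le hpq
  have hM : 0 < M := hq.trans_le hqM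
  have hq1 : q < 1 := lt_of_le_of_lt hqM hM1
  have hp1 : p < 1 := lt_of_le_of_lt hpq hq1
  set Lp : ℝ := -Real.log p with hLp
  set Lq : ℝ := -Real.log q with hLq
  set LM : ℝ := -Real.log M with hLM
  have hLppos : 0 < Lp := by simp [hLp]; exact Real.log_neg hp hp1
  have hLqpos : 0 < Lq := by simp [hLq]; exact Real.log_neg hq hq1
  have hLMpos : 0 < LM := by simp [hLM]; exact Real.log_neg hM hM1
  set δ₀ : ℝ := min 1 (LM * M / (2 * (Lp * Lq))) with hδ₀def
  have hδ₀pos : 0 < δ₀ := lt_min one_pos (by positivity)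
  have hδ₀1 : δ₀ ≤ 1 := min_le_left _ _
  refine ⟨δ₀, hδ₀pos, hδ₀1, ?_⟩
  have h1 : 1 - p ^ δ₀ ≤ δ₀ * Lp := by simpa [hLp] using one_sub_rpow_le' hp δ₀
  have h2 : 1 - q ^ δ₀ ≤ δ₀ * Lq := by simpa [hLq] using one_sub_rpow_le' hq δ₀
  have h1' : 0 ≤ 1 - p ^ δ₀ := by
    have := Real.rpow_le_one hp.le hp1.le hδ₀pos.le; linarith
  have h2' : 0 ≤ 1 - q ^ δ₀ := by
    have := Real.rpow_le_one hq.le hq1.le hδ₀pos.le; linarith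
  have h3 : δ₀ * LM * M ≤ 1 - M ^ δ₀ := by
    simpa [hLM] using one_sub_rpow_ge' hM hM1.le hδ₀pos hδ₀1
  have h4 : (1 - p ^ δ₀) * (1 - q ^ δ₀) ≤ (δ₀ * Lp) * (δ₀ * Lq) :=
    mul_le_mul h1 h2 h2' (by positivity)
  have h5 : δ₀ ≤ LM * M / (2 * (Lp * Lq)) := min_le_right _ _
  have h6 : δ₀ * (2 * (Lp * Lq)) ≤ LM * M := by
    rw [← le_div_iff₀ (by positivity)]; exact h5
  nlinarith [mul_le_mul_of_nonneg_left h6 hδ₀pos.le]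

section approach

private lemma ub_lemma (p q M : ℝ) (hp : 0 < p) (hpq : p ≤ q) (hqM : q ≤ M) (hM1 : M ≤ 1)
    (f : ℝ → ℝ)
    (hf : ∀ δ : ℝ, f δ = (max 0 (-2 + (p ^ δ + q ^ δ + M ^ δ) +
        2 * Real.sqrt ((1 - p ^ δ) * (1 - q ^ δ) * (1 - M ^ δ)))) ^ (1 / δ)) :
    ∀ δ : ℝ, 0 < δ → f δ ≤ p * q := by
  intro δ hδ
  have hq : 0 < q := hp.trans_le hpq
  have hM : 0 < M := hq.trans_le hqM
  have hq1 : q ≤ 1 := hqM.trans hM1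
  have hp1 : p ≤ 1 := hpq.trans hq1
  rw [hf δ]
  have hE := aux_le' (p ^ δ) (q ^ δ) (M ^ δ)
    (Real.rpow_le_one hp.le hp1 hδ.le) (Real.rpow_le_one hq.le hq1 hδ.le)
    (Real.rpow_le_one hM.le hM1 hδ.le)
  have hmax : max 0 (-2 + (p ^ δ + q ^ δ + M ^ δ) +
      2 * Real.sqrt ((1 - p ^ δ) * (1 - q ^ δ) * (1 - M ^ δ))) ≤ (p * q) ^ δ := by
    rw [Real.mul_rpow hp.le hq.le]
    exact max_le (by positivity) hE
  calc (max 0 (-2 + (p ^ δ + q ^ δ + M ^ δ) +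
      2 * Real.sqrt ((1 - p ^ δ) * (1 - q ^ δ) * (1 - M ^ δ)))) ^ (1/δ)
      ≤ ((p * q) ^ δ) ^ (1/δ) :=
        Real.rpow_le_rpow (le_max_left _ _) hmax (by positivity)
    _ = p * q := rpow_one_div_self' (by positivity) hδ.ne'

private lemma val_lemma (p q M : ℝ) (hp : 0 < p) (hpq : p ≤ q) (hqM : q ≤ M) (hM1 : M ≤ 1)
    (f : ℝ → ℝ)
    (hf : ∀ δ : ℝ, f δ = (max 0 (-2 + (p ^ δ + q ^ δ + M ^ δ) +
        2 * Real.sqrt ((1 - p ^ δ) * (1 - q ^ δ) * (1 - M ^ δ)))) ^ (1 / δ)) :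
    ∀ δ : ℝ, 0 < δ → p ^ δ + q ^ δ - p ^ δ * q ^ δ = M ^ δ → f δ = p * q := by
  intro δ hδ hg
  have hq : 0 < q := hp.trans_le hpq
  have hM : 0 < M := hq.trans_le hqM
  rw [hf δ]
  have hMδ1 : M ^ δ ≤ 1 := Real.rpow_le_one hM.le hM1 hδ.le
  have h1c : 1 - M ^ δ = (1 - p ^ δ) * (1 - q ^ δ) := by rw [← hg]; ring
  rw [aux_eq' _ _ _ hMδ1 h1c, max_eq_right (by positivity), ← Real.mul_rpow hp.le hq.le,
    rpow_one_div_self' (by positivity) hδ.ne']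

private lemma tie_approach' (p M : ℝ) (hp : 0 < p) (hpM : p ≤ M) (hM1 : M ≤ 1)
    (f : ℝ → ℝ)
    (hf : ∀ δ : ℝ, f δ = (max 0 (-2 + (p ^ δ + M ^ δ + M ^ δ) +
        2 * Real.sqrt ((1 - p ^ δ) * (1 - M ^ δ) * (1 - M ^ δ)))) ^ (1 / δ)) :
    ∀ w : ℝ, w < p * M → ∃ δ : ℝ, 1 ≤ δ ∧ w < f δ := by
  intro w hw
  have hM : 0 < M := hp.trans_le hpM
  have hlb : ∀ δ : ℝ, 0 < δ → p * M * (2:ℝ)⁻¹ ^ (1/δ) ≤ f δ := by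
    intro δ hδ
    rw [hf δ]
    have hpMδ : p ^ δ ≤ M ^ δ := Real.rpow_le_rpow hp.le hpM hδ.le
    have hMδ1 : M ^ δ ≤ 1 := Real.rpow_le_one hM.le hM1 hδ.le
    have hE := aux_tie' (p ^ δ) (M ^ δ) (by positivity) hpMδ hMδ1
    have hkey : (p * M) ^ δ * 2⁻¹ ≤ max 0 (-2 + (p ^ δ + M ^ δ + M ^ δ) +
        2 * Real.sqrt ((1 - p ^ δ) * (1 - M ^ δ) * (1 - M ^ δ))) := by
      refine le_trans ?_ (le_max_right _ _)
      rw [Real.mul_rpow hp.le hM.le]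
      linarith
    calc p * M * (2:ℝ)⁻¹ ^ (1/δ) = ((p * M) ^ δ * 2⁻¹) ^ (1/δ) := by
          rw [Real.mul_rpow (by positivity) (by norm_num),
            rpow_one_div_self' (by positivity) hδ.ne']
      _ ≤ _ := Real.rpow_le_rpow (by positivity) hkey (by positivity)
  set ε : ℝ := p * M - w with hε
  have hεpos : 0 < ε := by simp [hε]; linarith
  set δ : ℝ := max 1 (p * M * Real.log 2 / ε + 1) with hδdef
  have hδ1 : 1 ≤ δ := le_max_left _ _
  have hδpos : 0 < δ := lt_of_lt_of_le one_pos hδ1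
  refine ⟨δ, hδ1, lt_of_lt_of_le ?_ (hlb δ hδpos)⟩
  have hexp : (2:ℝ)⁻¹ ^ (1/δ) = Real.exp (-(Real.log 2 * (1/δ))) := by
    rw [Real.rpow_def_of_pos (by norm_num : (0:ℝ) < 2⁻¹), Real.log_inv]; ring_nf
  have hber : 1 - Real.log 2 / δ ≤ (2:ℝ)⁻¹ ^ (1/δ) := by
    have h' : -(Real.log 2 * (1/δ)) = -(Real.log 2 / δ) := by ring
    rw [hexp, h']
    have := Real.add_one_le_exp (-(Real.log 2 / δ))
    linarith
  have hlog2 : 0 < Real.log 2 := Real.log_pos (by norm_num)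
  have hmain : p * M * Real.log 2 / δ < ε := by
    rw [div_lt_iff₀ hδpos]
    have h2 : p * M * Real.log 2 / ε + 1 ≤ δ := le_max_right _ _
    have h3 : p * M * Real.log 2 / ε < δ := by linarith
    rw [div_lt_iff₀ hεpos] at h3
    nlinarith
  have hch : p * M * (1 - Real.log 2 / δ) ≤ p * M * (2:ℝ)⁻¹ ^ (1/δ) :=
    mul_le_mul_of_nonneg_left hber (by positivity)
  have hexpand : p * M * (1 - Real.log 2 / δ) = p * M - p * M * Real.log 2 / δ := by ring
  linarith [hch, hexpand.symm.le, hexpand.le, hmain]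

set_option maxHeartbeats 1000000 in
private lemma M1_approach' (p q : ℝ) (hp : 0 < p) (hpq : p ≤ q) (hq1 : q < 1)
    (f : ℝ → ℝ)
    (hf : ∀ δ : ℝ, f δ = (max 0 (-2 + (p ^ δ + q ^ δ + (1:ℝ) ^ δ) +
        2 * Real.sqrt ((1 - p ^ δ) * (1 - q ^ δ) * (1 - (1:ℝ) ^ δ)))) ^ (1 / δ)) :
    ∀ w : ℝ, w < p * q → ∃ δ : ℝ, 0 < δ ∧ w < f δ := by
  intro w hw
  have hq : 0 < q := hp.trans_le hpq
  have hp1 : p < 1 := lt_of_le_of_lt hpq hq1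
  set Lp : ℝ := -Real.log p with hLp
  set Lq : ℝ := -Real.log q with hLq
  have hLppos : 0 < Lp := by simp [hLp]; exact Real.log_neg hp hp1
  have hLqpos : 0 < Lq := by simp [hLq]; exact Real.log_neg hq hq1
  set K : ℝ := Lp * Lq with hK
  have hKpos : 0 < K := mul_pos hLppos hLqpos
  clear_value K
  set ε : ℝ := p * q - w with hε
  have hεpos : 0 < ε := by simp [hε]; linarith
  set δ : ℝ := min 1 (min (p * q / K) (ε / (2 * K))) with hδdef
  have hδpos : 0 < δ := lt_min one_pos (lt_min (by positivity) (by positivity))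
  have hδ1 : δ ≤ 1 := min_le_left _ _
  have hδa : δ ≤ p * q / K := le_trans (min_le_right _ _) (min_le_left _ _)
  have hδb : δ ≤ ε / (2 * K) := le_trans (min_le_right _ _) (min_le_right _ _)
  refine ⟨δ, hδpos, ?_⟩
  clear hδdef
  clear_value δ
  clear_value ε
  have hfδ : f δ = (max 0 (p ^ δ + q ^ δ - 1)) ^ (1/δ) := by
    rw [hf δ, Real.one_rpow,
      show -2 + (p ^ δ + q ^ δ + 1) = p ^ δ + q ^ δ - 1 by ring]
    norm_num
  have h1 : 1 - p ^ δ ≤ δ * Lp := by simpa [hLp] using one_sub_rpow_le' hp δ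
  have h2 : 1 - q ^ δ ≤ δ * Lq := by simpa [hLq] using one_sub_rpow_le' hq δ
  have h1' : 0 ≤ 1 - p ^ δ := by
    have := Real.rpow_le_one hp.le hp1.le hδpos.le; linarith
  have h2' : 0 ≤ 1 - q ^ δ := by
    have := Real.rpow_le_one hq.le hq1.le hδpos.le; linarith
  have hab : p ^ δ * q ^ δ = (p * q) ^ δ := (Real.mul_rpow hp.le hq.le).symm
  have hprod : (1 - p ^ δ) * (1 - q ^ δ) ≤ δ ^ 2 * K := by
    have := mul_le_mul h1 h2 h2' (by positivity)
    nlinarith [hK]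
  have hElb : (p * q) ^ δ - δ ^ 2 * K ≤ p ^ δ + q ^ δ - 1 := by nlinarith [hprod, hab]
  have hpq1 : p * q ≤ 1 := by nlinarith
  have hpqpos : 0 < p * q := by positivity
  have hpqδ : p * q ≤ (p * q) ^ δ := by
    calc p * q = (p * q) ^ (1:ℝ) := (Real.rpow_one _).symm
    _ ≤ (p * q) ^ δ := Real.rpow_le_rpow_of_exponent_ge hpqpos hpq1 hδ1
  set u : ℝ := δ ^ 2 * K / (p * q) ^ δ with hu
  clear_value u
  have hpqδpos : 0 < (p * q) ^ δ := by positivity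
  have hu0 : 0 ≤ u := by rw [hu]; positivity
  have hu1 : u ≤ 1 := by
    rw [hu, div_le_one hpqδpos]
    have h12 : δ * K ≤ p * q / K * K := mul_le_mul_of_nonneg_right hδa hKpos.le
    have h13 : p * q / K * K = p * q := div_mul_cancel₀ _ hKpos.ne'
    rw [h13] at h12
    nlinarith
  have hfac : (p * q) ^ δ - δ ^ 2 * K = (p * q) ^ δ * (1 - u) := by
    rw [hu, mul_sub, mul_one, mul_div_assoc', mul_comm ((p * q) ^ δ) (δ ^ 2 * K),
      mul_div_assoc, div_self hpqδpos.ne', mul_one]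
  have hstep : (p * q) * (1 - u) ^ (1/δ) ≤ f δ := by
    rw [hfδ]
    have hle : (p * q) ^ δ * (1 - u) ≤ max 0 (p ^ δ + q ^ δ - 1) := by
      refine le_trans ?_ (le_max_right _ _)
      rw [← hfac]; exact hElb
    calc (p * q) * (1 - u) ^ (1/δ) = ((p * q) ^ δ * (1 - u)) ^ (1/δ) := by
          rw [Real.mul_rpow (by positivity) (by linarith),
            rpow_one_div_self' hpqpos.le hδpos.ne']
    _ ≤ _ := Real.rpow_le_rpow (mul_nonneg hpqδpos.le (by linarith)) hle (by positivity)
  have hber : 1 - u / δ ≤ (1 - u) ^ (1/δ) := by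
    have hone : 1 ≤ 1/δ := by
      rw [le_div_iff₀ hδpos]; linarith
    have := one_add_mul_self_le_rpow_one_add (s := -u) (by linarith) hone
    calc 1 - u / δ = 1 + 1/δ * (-u) := by ring
    _ ≤ (1 + -u) ^ (1/δ) := this
    _ = (1 - u) ^ (1/δ) := by ring_nf
  have hfinal : p * q * (u / δ) ≤ δ * K := by
    rw [hu]
    have expand : p * q * (δ ^ 2 * K / (p * q) ^ δ / δ) = (δ * K) * (p * q / (p * q) ^ δ) := by
      field_simp
    rw [expand]
    have hra : p * q / (p * q) ^ δ ≤ 1 := by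
      rw [div_le_one hpqδpos]; exact hpqδ
    have h9 : (0:ℝ) ≤ δ * K := (mul_pos hδpos hKpos).le
    have h14 := mul_le_mul_of_nonneg_left hra h9
    rw [mul_one] at h14
    linarith
  have hδK : δ * K ≤ ε / 2 := by
    have h10 : δ * K ≤ ε / (2 * K) * K := mul_le_mul_of_nonneg_right hδb hKpos.le
    have h11 : ε / (2 * K) * K = ε / 2 := by field_simp
    linarith [h10, h11.symm.le, h11.le]
  have hchain : p * q * (1 - u / δ) ≤ p * q * (1 - u) ^ (1/δ) :=
    mul_le_mul_of_nonneg_left hber hpqpos.le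
  have hεw : ε = p * q - w := hε
  linarith [hstep, hchain, hfinal, hδK]

private lemma f_one' (p q M : ℝ) (hp : 0 < p) (hq1 : q = 1) (hM1 : M = 1)
    (f : ℝ → ℝ)
    (hf : ∀ δ : ℝ, f δ = (max 0 (-2 + (p ^ δ + q ^ δ + M ^ δ) +
        2 * Real.sqrt ((1 - p ^ δ) * (1 - q ^ δ) * (1 - M ^ δ)))) ^ (1 / δ)) :
    f 1 = p * q := by
  rw [hf 1, hq1, hM1]
  rw [Real.rpow_one, Real.one_rpow]
  norm_num
  rw [show -2 + (p + 1 + 1) = p by ring, max_eq_right hp.le]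

end approach
private theorem sorted_main (p q M : ℝ) (hp : 0 < p) (hpq : p ≤ q) (hqM : q ≤ M) (hM1 : M ≤ 1)
    (f : ℝ → ℝ)
    (hf : ∀ δ : ℝ, f δ = (max 0 (-2 + (p ^ δ + q ^ δ + M ^ δ) +
        2 * Real.sqrt ((1 - p ^ δ) * (1 - q ^ δ) * (1 - M ^ δ)))) ^ (1 / δ)) :
    sSup (f '' Set.Ioi (0:ℝ)) = p * q ∧
      (p * q + 2 * M - (p + q + M) ≤ 0 → sSup (f '' Set.Ici (1:ℝ)) = p * q) := by
  have hq : 0 < q := hp.trans_le hpq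
  have hM : 0 < M := hq.trans_le hqM
  have hq1 : q ≤ 1 := hqM.trans hM1
  have hp1 : p ≤ 1 := hpq.trans hq1
  have ub := ub_lemma p q M hp hpq hqM hM1 f hf
  have val := val_lemma p q M hp hpq hqM hM1 f hf
  constructor
  · apply csSup_eq_of_forall_le_of_forall_lt_exists_gt
    · exact ⟨f 1, ⟨1, Set.mem_Ioi.2 one_pos, rfl⟩⟩
    · rintro a ⟨δ, hδ, rfl⟩
      exact ub δ (Set.mem_Ioi.1 hδ)
    · intro w hw
      rcases eq_or_lt_of_le hM1 with hM1' | hM1'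
      · -- M = 1
        rcases eq_or_lt_of_le hq1 with hq1' | hq1'
        · -- q = 1
          refine ⟨f 1, ⟨1, Set.mem_Ioi.2 one_pos, rfl⟩, ?_⟩
          rw [f_one' p q M hp hq1' hM1' f hf]
          exact hw
        · -- q < 1, M = 1 : δ → 0 argument
          subst hM1'
          obtain ⟨δ, hδpos, hwlt⟩ := M1_approach' p q hp hpq hq1' f (by
            intro δ; rw [hf δ]) w hw
          exact ⟨f δ, ⟨δ, Set.mem_Ioi.2 hδpos, rfl⟩, hwlt⟩
      · -- M < 1
        rcases eq_or_lt_of_le hqM with hqM' | hqM'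
        · -- tie q = M
          subst hqM'
          obtain ⟨δ, hδ1, hwlt⟩ := tie_approach' p q hp hpq hM1 f (by intro δ; rw [hf δ]) w hw
          exact ⟨f δ, ⟨δ, Set.mem_Ioi.2 (lt_of_lt_of_le one_pos hδ1), rfl⟩, hwlt⟩
        · -- strict q < M < 1
          obtain ⟨δ₀, hδ₀pos, _, hg₀⟩ := small_pos' p q M hp hpq hqM hM1'
          obtain ⟨δ, hδge, heq⟩ := strict_exists' p q M hp hpq hqM' δ₀ hδ₀pos hg₀
          have hδpos : 0 < δ := lt_of_lt_of_le hδ₀pos hδge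
          refine ⟨f δ, ⟨δ, Set.mem_Ioi.2 hδpos, rfl⟩, ?_⟩
          rw [val δ hδpos heq]
          exact hw
  · intro hy
    apply csSup_eq_of_forall_le_of_forall_lt_exists_gt
    · exact ⟨f 1, ⟨1, Set.mem_Ici.2 le_rfl, rfl⟩⟩
    · rintro a ⟨δ, hδ, rfl⟩
      exact ub δ (lt_of_lt_of_le one_pos (Set.mem_Ici.1 hδ))
    · intro w hw
      rcases eq_or_lt_of_le hM1 with hM1' | hM1'
      · -- M = 1 : hypothesis forces q = 1
        have hq1' : q = 1 := by
          by_contra hne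
          have hqlt : q < 1 := lt_of_le_of_ne hq1 hne
          have hplt : p < 1 := lt_of_le_of_lt hpq hqlt
          rw [hM1'] at hy
          nlinarith [mul_pos (show (0:ℝ) < 1 - p by linarith)
            (show (0:ℝ) < 1 - q by linarith)]
        refine ⟨f 1, ⟨1, Set.mem_Ici.2 le_rfl, rfl⟩, ?_⟩
        rw [f_one' p q M hp hq1' hM1' f hf]
        exact hw
      · rcases eq_or_lt_of_le hqM with hqM' | hqM'
        · subst hqM'
          obtain ⟨δ, hδ1, hwlt⟩ := tie_approach' p q hp hpq hM1 f (by intro δ; rw [hf δ]) w hw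
          exact ⟨f δ, ⟨δ, Set.mem_Ici.2 hδ1, rfl⟩, hwlt⟩
        · have hg1 : 0 ≤ p ^ (1:ℝ) + q ^ (1:ℝ) - p ^ (1:ℝ) * q ^ (1:ℝ) - M ^ (1:ℝ) := by
            simp only [Real.rpow_one]
            linarith
          obtain ⟨δ, hδge, heq⟩ := strict_exists' p q M hp hpq hqM' 1 one_pos hg1
          refine ⟨f δ, ⟨δ, Set.mem_Ici.2 hδge, rfl⟩, ?_⟩
          rw [val δ (lt_of_lt_of_le one_pos hδge) heq]
          exact hw
private lemma glue (x₁ x₂ x₃ a b c : ℝ) (ha : 0 < a) (hab : a ≤ b) (hbc : b ≤ c) (hc1 : c ≤ 1)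
    (hmax : max x₁ (max x₂ x₃) = c)
    (hprod : x₁ * x₂ * x₃ = a * b * c)
    (hmin : min (x₁ * x₂) (min (x₁ * x₃) (x₂ * x₃)) = a * b)
    (hsum : x₁ + x₂ + x₃ = a + b + c)
    (f : ℝ → ℝ)
    (hf : ∀ δ : ℝ, f δ = (max 0 (-2 + (a ^ δ + b ^ δ + c ^ δ) +
        2 * Real.sqrt ((1 - a ^ δ) * (1 - b ^ δ) * (1 - c ^ δ)))) ^ (1 / δ)) :
    sSup (f '' Set.Ioi (0 : ℝ)) = x₁ * x₂ * x₃ / max x₁ (max x₂ x₃) ∧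
    x₁ * x₂ * x₃ / max x₁ (max x₂ x₃) = min (x₁ * x₂) (min (x₁ * x₃) (x₂ * x₃)) ∧
    (x₁ * x₂ * x₃ / max x₁ (max x₂ x₃) + 2 * max x₁ (max x₂ x₃) - (x₁ + x₂ + x₃) ≤ 0 →
      sSup (f '' Set.Ici (1 : ℝ)) = x₁ * x₂ * x₃ / max x₁ (max x₂ x₃)) := by
  have hc : 0 < c := ha.trans_le (hab.trans hbc)
  have hdiv : x₁ * x₂ * x₃ / max x₁ (max x₂ x₃) = a * b := by
    rw [hmax, hprod]
    field_simp
  obtain ⟨H1, H3⟩ := sorted_main a b c ha hab hbc hc1 f hf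
  refine ⟨by rw [hdiv]; exact H1, by rw [hdiv, hmin], ?_⟩
  intro hy
  rw [hdiv]
  apply H3
  rw [hdiv, hmax, hsum] at hy
  exact hy

/-- The supremum of `f(δ) = (max(0, e(δ)))^{1/δ}` over `δ ∈ (0,∞)` equals
`x₁x₂x₃ / max(x₁,x₂,x₃) = min_{i≠j} x_i x_j`; and if `ỹ ≤ 0` the same supremum is already
attained over `δ ∈ [1,∞)`. -/
theorem stmt_10 (x₁ x₂ x₃ : ℝ)
    (h₁ : 0 < x₁ ∧ x₁ ≤ 1) (h₂ : 0 < x₂ ∧ x₂ ≤ 1) (h₃ : 0 < x₃ ∧ x₃ ≤ 1)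
    (f : ℝ → ℝ)
    (hf : ∀ δ : ℝ, f δ =
      (max 0 (-2 + (x₁ ^ δ + x₂ ^ δ + x₃ ^ δ) +
        2 * Real.sqrt ((1 - x₁ ^ δ) * (1 - x₂ ^ δ) * (1 - x₃ ^ δ)))) ^ (1 / δ)) :
    sSup (f '' Set.Ioi (0 : ℝ)) = x₁ * x₂ * x₃ / max x₁ (max x₂ x₃) ∧
    x₁ * x₂ * x₃ / max x₁ (max x₂ x₃) = min (x₁ * x₂) (min (x₁ * x₃) (x₂ * x₃)) ∧
    (x₁ * x₂ * x₃ / max x₁ (max x₂ x₃) + 2 * max x₁ (max x₂ x₃) - (x₁ + x₂ + x₃) ≤ 0 →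
      sSup (f '' Set.Ici (1 : ℝ)) = x₁ * x₂ * x₃ / max x₁ (max x₂ x₃)) := by
  obtain ⟨hx₁, hx₁1⟩ := h₁
  obtain ⟨hx₂, hx₂1⟩ := h₂
  obtain ⟨hx₃, hx₃1⟩ := h₃
  have hperm : ∀ a b c : ℝ,
      (∀ δ : ℝ, -2 + (x₁ ^ δ + x₂ ^ δ + x₃ ^ δ) = -2 + (a ^ δ + b ^ δ + c ^ δ) ∧
        (1 - x₁ ^ δ) * (1 - x₂ ^ δ) * (1 - x₃ ^ δ)
          = (1 - a ^ δ) * (1 - b ^ δ) * (1 - c ^ δ)) →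
      ∀ δ : ℝ, f δ = (max 0 (-2 + (a ^ δ + b ^ δ + c ^ δ) +
        2 * Real.sqrt ((1 - a ^ δ) * (1 - b ^ δ) * (1 - c ^ δ)))) ^ (1 / δ) := by
    intro a b c h δ
    rw [hf δ, (h δ).1, (h δ).2]
  rcases le_total x₁ x₂ with h12 | h12
  · rcases le_total x₂ x₃ with h23 | h23
    · -- x₁ ≤ x₂ ≤ x₃
      refine glue x₁ x₂ x₃ x₁ x₂ x₃ hx₁ h12 h23 hx₃1 ?_ (by ring) ?_ (by ring) f
        (hperm _ _ _ (fun δ => ⟨by ring, by ring⟩))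
      · rw [max_eq_right h23, max_eq_right (h12.trans h23)]
      · have k1 : x₁ * x₂ ≤ x₁ * x₃ := mul_le_mul_of_nonneg_left h23 hx₁.le
        have k2 : x₁ * x₂ ≤ x₂ * x₃ := by nlinarith
        exact le_antisymm (min_le_left _ _) (le_min le_rfl (le_min k1 k2))
    · rcases le_total x₁ x₃ with h13 | h13
      · -- x₁ ≤ x₃ ≤ x₂
        refine glue x₁ x₂ x₃ x₁ x₃ x₂ hx₁ h13 h23 hx₂1 ?_ (by ring) ?_ (by ring) f
          (hperm _ _ _ (fun δ => ⟨by ring, by ring⟩))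
        · rw [max_eq_left h23, max_eq_right h12]
        · have k1 : x₁ * x₃ ≤ x₁ * x₂ := mul_le_mul_of_nonneg_left h23 hx₁.le
          have k2 : x₁ * x₃ ≤ x₂ * x₃ := by nlinarith
          exact le_antisymm ((min_le_right _ _).trans (min_le_left _ _))
            (le_min k1 (le_min le_rfl k2))
      · -- x₃ ≤ x₁ ≤ x₂
        refine glue x₁ x₂ x₃ x₃ x₁ x₂ hx₃ h13 h12 hx₂1 ?_ (by ring) ?_ (by ring) f
          (hperm _ _ _ (fun δ => ⟨by ring, by ring⟩))
        · rw [max_eq_left (h13.trans h12), max_eq_right h12]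
        · have k1 : x₃ * x₁ ≤ x₁ * x₂ := by nlinarith
          have k2 : x₃ * x₁ ≤ x₂ * x₃ := by nlinarith
          exact le_antisymm ((min_le_right _ _).trans ((min_le_left _ _).trans (by nlinarith)))
            (le_min k1 (le_min (by nlinarith) k2))
  · rcases le_total x₁ x₃ with h13 | h13
    · -- x₂ ≤ x₁ ≤ x₃
      refine glue x₁ x₂ x₃ x₂ x₁ x₃ hx₂ h12 h13 hx₃1 ?_ (by ring) ?_ (by ring) f
        (hperm _ _ _ (fun δ => ⟨by ring, by ring⟩))
      · rw [max_eq_right (h12.trans h13), max_eq_right h13]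
      · have k1 : x₂ * x₁ ≤ x₁ * x₃ := by nlinarith
        have k2 : x₂ * x₁ ≤ x₂ * x₃ := by nlinarith
        exact le_antisymm ((min_le_left _ _).trans (by nlinarith))
          (le_min (by nlinarith) (le_min k1 k2))
    · rcases le_total x₂ x₃ with h23 | h23
      · -- x₂ ≤ x₃ ≤ x₁
        refine glue x₁ x₂ x₃ x₂ x₃ x₁ hx₂ h23 h13 hx₁1 ?_ (by ring) ?_ (by ring) f
          (hperm _ _ _ (fun δ => ⟨by ring, by ring⟩))
        · rw [max_eq_right h23, max_eq_left h13]
        · have k1 : x₂ * x₃ ≤ x₁ * x₂ := by nlinarith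
          have k2 : x₂ * x₃ ≤ x₁ * x₃ := by nlinarith
          exact le_antisymm ((min_le_right _ _).trans (min_le_right _ _))
            (le_min k1 (le_min k2 le_rfl))
      · -- x₃ ≤ x₂ ≤ x₁
        refine glue x₁ x₂ x₃ x₃ x₂ x₁ hx₃ h23 h12 hx₁1 ?_ (by ring) ?_ (by ring) f
          (hperm _ _ _ (fun δ => ⟨by ring, by ring⟩))
        · rw [max_eq_left h23, max_eq_left h12]
        · have k1 : x₃ * x₂ ≤ x₁ * x₂ := by nlinarith
          have k2 : x₃ * x₂ ≤ x₁ * x₃ := by nlinarith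
          exact le_antisymm ((min_le_right _ _).trans ((min_le_right _ _).trans (by nlinarith)))
            (le_min k1 (le_min k2 (by nlinarith)))
end

section
/- Let a_{ijk} ∈ ℂ for i,j,k ∈ {0,1} and consider the trilinear form f(X,Y,Z) = Σ_{i,j,k=0}^{1} a_{ijk} x_i y_j z_k. Suppose there exist nonzero vectors X = (x₀,x₁), Y = (y₀,y₁), Z = (z₀,z₁) in ℂ² such that all partial derivatives of f vanish, i.e., for every i ∈ {0,1}: Σ_{j,k} a_{ijk} y_j z_k = 0; for every j ∈ {0,1}: Σ_{i,k} a_{ijk} x_i z_k = 0; and for every k ∈ {0,1}: Σ_{i,j} a_{ijk} x_i y_j = 0. Then det(B₀JB₁ᵗ − B₁JB₀ᵗ) = 0, where B₀ = [[a₀₀₀, a₁₀₀],[a₀₀₁, a₁₀₁]], B₁ = [[a₀₁₀, a₁₁₀],[a₀₁₁, a₁₁₁]], and J = [[0,−1],[1,0]]. -/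
open Matrix

/-- If the trilinear form `f(X,Y,Z) = Σ a_{ijk} x_i y_j z_k` is degenerate (all partial
derivatives vanish at some triple of nonzero vectors), then `det(B₀JB₁ᵀ − B₁JB₀ᵀ) = 0`. -/
theorem stmt_12 (a : Fin 2 → Fin 2 → Fin 2 → ℂ)
    (X Y Z : Fin 2 → ℂ) (hX : X ≠ 0) (hY : Y ≠ 0) (hZ : Z ≠ 0)
    (hx : ∀ i : Fin 2, ∑ j : Fin 2, ∑ k : Fin 2, a i j k * Y j * Z k = 0)
    (hy : ∀ j : Fin 2, ∑ i : Fin 2, ∑ k : Fin 2, a i j k * X i * Z k = 0)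
    (hz : ∀ k : Fin 2, ∑ i : Fin 2, ∑ j : Fin 2, a i j k * X i * Y j = 0)
    (B₀ B₁ J : Matrix (Fin 2) (Fin 2) ℂ)
    (hB₀ : B₀ = !![a 0 0 0, a 1 0 0; a 0 0 1, a 1 0 1])
    (hB₁ : B₁ = !![a 0 1 0, a 1 1 0; a 0 1 1, a 1 1 1])
    (hJ : J = !![0, -1; 1, 0]) :
    (B₀ * J * B₁ᵀ - B₁ * J * B₀ᵀ).det = 0 := by
  subst hB₀ hB₁ hJ
  rw [← Matrix.exists_mulVec_eq_zero_iff]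
  refine ⟨Z, hZ, ?_⟩
  have e0 := hx 0; have e1 := hx 1
  have f0 := hy 0; have f1 := hy 1
  have g0 := hz 0; have g1 := hz 1
  simp only [Fin.sum_univ_two] at e0 e1 f0 f1 g0 g1
  obtain ⟨p, hp⟩ := Function.ne_iff.mp hX
  obtain ⟨q, hq⟩ := Function.ne_iff.mp hY
  funext k
  fin_cases p <;> fin_cases q <;> fin_cases k <;>
    simp only [Fin.zero_eta, Fin.mk_one, Fin.isValue, Pi.zero_apply, Matrix.mulVec,
      dotProduct, Fin.sum_univ_two, Matrix.sub_apply, Matrix.mul_apply,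
      Matrix.transpose_apply, Matrix.cons_val', Matrix.cons_val_zero, Matrix.cons_val_one,
      Matrix.head_cons, Matrix.head_fin_const, Matrix.of_apply, Matrix.empty_val',
      Matrix.cons_val_fin_one] at hp hq ⊢ <;>
    refine mul_left_cancel₀ (mul_ne_zero hp hq) ?_
  · linear_combination a 1 0 0 * Y 0 * f1 + (a 0 1 0 * X 0 + a 1 1 0 * X 1) * e1
      - a 1 1 0 * Y 0 * f0 - (a 1 1 0 * Z 0 + a 1 1 1 * Z 1) * g0
  · linear_combination a 1 0 1 * Y 0 * f1 + (a 0 1 1 * X 0 + a 1 1 1 * X 1) * e1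
      - a 1 1 1 * Y 0 * f0 - (a 1 1 0 * Z 0 + a 1 1 1 * Z 1) * g1
  · linear_combination -(a 1 1 0 * Y 1 * f0) - (a 0 0 0 * X 0 + a 1 0 0 * X 1) * e1
      + a 1 0 0 * Y 1 * f1 + (a 1 0 0 * Z 0 + a 1 0 1 * Z 1) * g0
  · linear_combination -(a 1 1 1 * Y 1 * f0) - (a 0 0 1 * X 0 + a 1 0 1 * X 1) * e1
      + a 1 0 1 * Y 1 * f1 + (a 1 0 0 * Z 0 + a 1 0 1 * Z 1) * g1
  · linear_combination -(a 0 0 0 * Y 0 * f1) - (a 1 1 0 * X 1 + a 0 1 0 * X 0) * e0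
      + a 0 1 0 * Y 0 * f0 + (a 0 1 0 * Z 0 + a 0 1 1 * Z 1) * g0
  · linear_combination -(a 0 0 1 * Y 0 * f1) - (a 1 1 1 * X 1 + a 0 1 1 * X 0) * e0
      + a 0 1 1 * Y 0 * f0 + (a 0 1 0 * Z 0 + a 0 1 1 * Z 1) * g1
  · linear_combination a 0 1 0 * Y 1 * f0 + (a 1 0 0 * X 1 + a 0 0 0 * X 0) * e0
      - a 0 0 0 * Y 1 * f1 - (a 0 0 0 * Z 0 + a 0 0 1 * Z 1) * g0
  · linear_combination a 0 1 1 * Y 1 * f0 + (a 1 0 1 * X 1 + a 0 0 1 * X 0) * e0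
      - a 0 0 1 * Y 1 * f1 - (a 0 0 0 * Z 0 + a 0 0 1 * Z 1) * g1
end

section
/- (Principal minors of a symmetric matrix satisfy Cayley's 2×2×2 hyperdeterminant) Let à be a symmetric n×n matrix over a commutative ring (e.g., ℝ), and for S ⊆ {1,…,n} let A_S = det Ã_S denote the principal minor indexed by S. Then for any three distinct indices i, j, k ∈ {1,…,n}: (A_{ijk} − A_i·A_{jk} − A_j·A_{ik} − A_k·A_{ij} + 2·A_i·A_j·A_k)² = 4·(A_iA_j − A_{ij})·(A_iA_k − A_{ik})·(A_jA_k − A_{jk}). -/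
open Matrix

lemma det_single {R : Type*} [CommRing R] {n : ℕ}
    (M : Matrix (Fin n) (Fin n) R) (i : Fin n) :
    (M.submatrix (fun x : {x // x ∈ ({i} : Finset (Fin n))} => (x : Fin n))
                 (fun x : {x // x ∈ ({i} : Finset (Fin n))} => (x : Fin n))).det
      = M i i := by
  let f : Fin 1 → {x // x ∈ ({i} : Finset (Fin n))} := ![⟨i, by simp⟩]
  have hf : Function.Bijective f := by
    constructor
    · intro a b _; fin_cases a; fin_cases b; rfl
    · rintro ⟨x, hx⟩
      simp only [Finset.mem_singleton] at hx
      exact ⟨0, Subtype.ext hx.symm⟩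
  rw [← Matrix.det_submatrix_equiv_self (Equiv.ofBijective f hf), Matrix.submatrix_submatrix,
    Matrix.det_fin_one]
  rfl

lemma det_pair {R : Type*} [CommRing R] {n : ℕ}
    (M : Matrix (Fin n) (Fin n) R) (i j : Fin n) (hij : i ≠ j) :
    (M.submatrix (fun x : {x // x ∈ ({i, j} : Finset (Fin n))} => (x : Fin n))
                 (fun x : {x // x ∈ ({i, j} : Finset (Fin n))} => (x : Fin n))).det
      = M i i * M j j - M i j * M j i := by
  let f : Fin 2 → {x // x ∈ ({i, j} : Finset (Fin n))} := ![⟨i, by simp⟩, ⟨j, by simp⟩]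
  have hf : Function.Bijective f := by
    constructor
    · intro a b h
      fin_cases a <;> fin_cases b <;> first
        | rfl
        | exact absurd (congrArg Subtype.val h : i = j) hij
        | exact absurd (congrArg Subtype.val h : j = i).symm hij
    · rintro ⟨x, hx⟩
      rcases Finset.mem_insert.1 hx with h | h
      · exact ⟨0, Subtype.ext h.symm⟩
      · simp only [Finset.mem_singleton] at h
        exact ⟨1, Subtype.ext h.symm⟩
  rw [← Matrix.det_submatrix_equiv_self (Equiv.ofBijective f hf), Matrix.submatrix_submatrix,
    Matrix.det_fin_two]
  rfl

lemma det_triple {R : Type*} [CommRing R] {n : ℕ}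
    (M : Matrix (Fin n) (Fin n) R) (i j k : Fin n)
    (hij : i ≠ j) (hjk : j ≠ k) (hik : i ≠ k) :
    (M.submatrix (fun x : {x // x ∈ ({i, j, k} : Finset (Fin n))} => (x : Fin n))
                 (fun x : {x // x ∈ ({i, j, k} : Finset (Fin n))} => (x : Fin n))).det
      = M i i * M j j * M k k - M i i * M j k * M k j - M i j * M j i * M k k
        + M i j * M j k * M k i + M i k * M j i * M k j - M i k * M j j * M k i := by
  let f : Fin 3 → {x // x ∈ ({i, j, k} : Finset (Fin n))} :=
    ![⟨i, by simp⟩, ⟨j, by simp⟩, ⟨k, by simp⟩]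
  have hf : Function.Bijective f := by
    constructor
    · intro a b h
      fin_cases a <;> fin_cases b <;> first
        | rfl
        | exact absurd (congrArg Subtype.val h : i = j) hij
        | exact absurd (congrArg Subtype.val h : j = i).symm hij
        | exact absurd (congrArg Subtype.val h : j = k) hjk
        | exact absurd (congrArg Subtype.val h : k = j).symm hjk
        | exact absurd (congrArg Subtype.val h : i = k) hik
        | exact absurd (congrArg Subtype.val h : k = i).symm hik
    · rintro ⟨x, hx⟩
      rcases Finset.mem_insert.1 hx with h | hx
      · exact ⟨0, Subtype.ext h.symm⟩
      rcases Finset.mem_insert.1 hx with h | hx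
      · exact ⟨1, Subtype.ext h.symm⟩
      · simp only [Finset.mem_singleton] at hx
        exact ⟨2, Subtype.ext hx.symm⟩
  rw [← Matrix.det_submatrix_equiv_self (Equiv.ofBijective f hf), Matrix.submatrix_submatrix,
    Matrix.det_fin_three]
  show M i i * M j j * M k k - M i i * M j k * M k j - M i j * M j i * M k k
      + M i j * M j k * M k i + M i k * M j i * M k j - M i k * M j j * M k i = _
  ring

/-- The principal minors of a symmetric matrix satisfy Cayley's 2×2×2 hyperdeterminant
relation: for distinct `i, j, k`,
`(A_{ijk} − A_iA_{jk} − A_jA_{ik} − A_kA_{ij} + 2A_iA_jA_k)²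
  = 4 (A_iA_j − A_{ij})(A_iA_k − A_{ik})(A_jA_k − A_{jk})`. -/
theorem stmt_16 {R : Type*} [CommRing R] (n : ℕ)
    (M : Matrix (Fin n) (Fin n) R) (hsymm : M.IsSymm)
    (A : Finset (Fin n) → R)
    (hA : ∀ S : Finset (Fin n),
      A S = (M.submatrix (fun i : {x // x ∈ S} => (i : Fin n))
                         (fun i : {x // x ∈ S} => (i : Fin n))).det)
    (i j k : Fin n) (hij : i ≠ j) (hjk : j ≠ k) (hik : i ≠ k) :
    (A {i, j, k} - A {i} * A {j, k} - A {j} * A {i, k} - A {k} * A {i, j}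
        + 2 * A {i} * A {j} * A {k}) ^ 2 =
      4 * (A {i} * A {j} - A {i, j}) * (A {i} * A {k} - A {i, k})
        * (A {j} * A {k} - A {j, k}) := by
  have hs : ∀ a b : Fin n, M a b = M b a := fun a b => hsymm.apply b a
  rw [hA {i,j,k}, hA {i}, hA {j}, hA {k}, hA {i,j}, hA {i,k}, hA {j,k}]
  rw [det_single M i, det_single M j, det_single M k,
      det_pair M i j hij, det_pair M i k hik, det_pair M j k hjk,
      det_triple M i j k hij hjk hik]
  rw [hs j i, hs k i, hs k j]
  ring
end

section
/- (Sign-consistency relation among the c-quantities) Let à be a symmetric n×n matrix over a commutative ring (e.g., ℝ), and for S ⊆ {1,…,n} let A_S = det Ã_S denote the principal minor indexed by S. For distinct indices p, q, r define c_{pqr} = A_{pqr} − A_pA_{qr} − A_qA_{pr} − A_rA_{pq} + 2A_pA_qA_r. Then for any four distinct indices l, i, j, k ∈ {1,…,n}: c_{lij}·c_{lik}·c_{ljk} = 4·(A_lA_i − A_{li})·(A_lA_j − A_{lj})·(A_lA_k − A_{lk})·c_{ijk}. -/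
open Matrix

section Aux

variable {R : Type*} [CommRing R] {n : ℕ} (M : Matrix (Fin n) (Fin n) R)

private lemma aux_det1 (p : Fin n) :
    (M.submatrix (fun i : {x // x ∈ ({p} : Finset (Fin n))} => (i : Fin n))
                 (fun i : {x // x ∈ ({p} : Finset (Fin n))} => (i : Fin n))).det = M p p := by
  let e : Fin 1 ≃ {x // x ∈ ({p} : Finset (Fin n))} :=
    { toFun := fun _ => ⟨p, by simp⟩
      invFun := fun _ => 0
      left_inv := fun x => Subsingleton.elim _ _
      right_inv := fun x => by
        have hx := x.2
        simp only [Finset.mem_singleton] at hx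
        exact Subtype.ext hx.symm }
  rw [← Matrix.det_submatrix_equiv_self e, Matrix.submatrix_submatrix, Matrix.det_fin_one]
  rfl

private lemma aux_det2 (p q : Fin n) (hpq : p ≠ q) :
    (M.submatrix (fun i : {x // x ∈ ({p, q} : Finset (Fin n))} => (i : Fin n))
                 (fun i : {x // x ∈ ({p, q} : Finset (Fin n))} => (i : Fin n))).det
      = M p p * M q q - M p q * M q p := by
  let f : Fin 2 → {x // x ∈ ({p, q} : Finset (Fin n))} :=
    ![⟨p, by simp⟩, ⟨q, by simp⟩]
  have hf : Function.Bijective f := by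
    constructor
    · intro a b hab
      fin_cases a <;> fin_cases b <;> simp_all [f, Subtype.ext_iff] <;>
        exact absurd hab.symm hpq
    · rintro ⟨x, hx⟩
      simp only [Finset.mem_insert, Finset.mem_singleton] at hx
      rcases hx with h | h
      · exact ⟨0, Subtype.ext h.symm⟩
      · exact ⟨1, Subtype.ext h.symm⟩
  let e := Equiv.ofBijective f hf
  rw [← Matrix.det_submatrix_equiv_self e, Matrix.submatrix_submatrix, Matrix.det_fin_two]
  rfl

private lemma aux_det3 (p q r : Fin n) (hpq : p ≠ q) (hpr : p ≠ r) (hqr : q ≠ r) :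
    (M.submatrix (fun i : {x // x ∈ ({p, q, r} : Finset (Fin n))} => (i : Fin n))
                 (fun i : {x // x ∈ ({p, q, r} : Finset (Fin n))} => (i : Fin n))).det
      = M p p * M q q * M r r - M p p * M q r * M r q - M p q * M q p * M r r
        + M p q * M q r * M r p + M p r * M q p * M r q - M p r * M q q * M r p := by
  let f : Fin 3 → {x // x ∈ ({p, q, r} : Finset (Fin n))} :=
    ![⟨p, by simp⟩, ⟨q, by simp⟩, ⟨r, by simp⟩]
  have hf : Function.Bijective f := by
    constructor
    · intro a b hab
      fin_cases a <;> fin_cases b <;> simp_all [f, Subtype.ext_iff] <;>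
        first
          | exact absurd hab.symm hpq | exact absurd hab.symm hpr
          | exact absurd hab.symm hqr
    · rintro ⟨x, hx⟩
      simp only [Finset.mem_insert, Finset.mem_singleton] at hx
      rcases hx with h | h | h
      · exact ⟨0, Subtype.ext h.symm⟩
      · exact ⟨1, Subtype.ext h.symm⟩
      · exact ⟨2, Subtype.ext h.symm⟩
  let e := Equiv.ofBijective f hf
  rw [← Matrix.det_submatrix_equiv_self e, Matrix.submatrix_submatrix, Matrix.det_fin_three]
  rfl

end Aux

/-- Sign-consistency relation among the `c`-quantities of the principal minors of a symmetric
matrix: for distinct `l, i, j, k`,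
`c_{lij} c_{lik} c_{ljk} = 4 (A_lA_i − A_{li})(A_lA_j − A_{lj})(A_lA_k − A_{lk}) c_{ijk}`. -/
theorem stmt_17 {R : Type*} [CommRing R] (n : ℕ)
    (M : Matrix (Fin n) (Fin n) R) (hsymm : M.IsSymm)
    (A : Finset (Fin n) → R)
    (hA : ∀ S : Finset (Fin n),
      A S = (M.submatrix (fun i : {x // x ∈ S} => (i : Fin n))
                         (fun i : {x // x ∈ S} => (i : Fin n))).det)
    (c : Fin n → Fin n → Fin n → R)
    (hc : ∀ p q r : Fin n, c p q r =
      A {p, q, r} - A {p} * A {q, r} - A {q} * A {p, r} - A {r} * A {p, q}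
        + 2 * A {p} * A {q} * A {r})
    (l i j k : Fin n)
    (hli : l ≠ i) (hlj : l ≠ j) (hlk : l ≠ k)
    (hij : i ≠ j) (hik : i ≠ k) (hjk : j ≠ k) :
    c l i j * c l i k * c l j k =
      4 * (A {l} * A {i} - A {l, i}) * (A {l} * A {j} - A {l, j})
        * (A {l} * A {k} - A {l, k}) * c i j k := by
  have h1 : ∀ p : Fin n, A {p} = M p p := fun p => (hA {p}).trans (aux_det1 M p)
  have h2 : ∀ p q : Fin n, p ≠ q → A {p, q} = M p p * M q q - M p q * M q p :=
    fun p q h => (hA {p, q}).trans (aux_det2 M p q h)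
  have h3 : ∀ p q r : Fin n, p ≠ q → p ≠ r → q ≠ r →
      A {p, q, r} = M p p * M q q * M r r - M p p * M q r * M r q - M p q * M q p * M r r
        + M p q * M q r * M r p + M p r * M q p * M r q - M p r * M q q * M r p :=
    fun p q r h h' h'' => (hA _).trans (aux_det3 M p q r h h' h'')
  have hs : ∀ p q : Fin n, M q p = M p q := fun p q => hsymm.apply p q
  rw [hc l i j, hc l i k, hc l j k, hc i j k,
    h3 l i j hli hlj hij, h3 l i k hli hlk hik, h3 l j k hlj hlk hjk, h3 i j k hij hik hjk,
    h2 l i hli, h2 l j hlj, h2 l k hlk, h2 i j hij, h2 i k hik, h2 j k hjk,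
    h1 l, h1 i, h1 j, h1 k,
    hs l i, hs l j, hs l k, hs i j, hs i k, hs j k]
  ring
end

section
/- (Determinant of a symmetric 4×4 matrix in terms of its proper principal minors) Let à be a symmetric 4×4 real matrix, and for nonempty S ⊆ {1,2,3,4} let A_S = det Ã_S denote the principal minor indexed by S. For distinct p,q,r define c_{pqr} = A_{pqr} − A_pA_{qr} − A_qA_{pr} − A_rA_{pq} + 2A_pA_qA_r. Assume A₁A₂ ≠ A₁₂, A₁A₃ ≠ A₁₃, and A₂A₃ ≠ A₂₃. Then A₁₂₃₄ = −(1/2)·[ c₁₂₃c₁₂₄/(A₁A₂ − A₁₂) + c₁₂₃c₁₃₄/(A₁A₃ − A₁₃) + c₁₂₃c₂₃₄/(A₂A₃ − A₂₃) ] + A₁c₂₃₄ + A₂c₁₃₄ + A₃c₁₂₄ + A₄c₁₂₃ − 2A₁A₂A₃A₄ + A₁₂A₃₄ + A₁₃A₂₄ + A₁₄A₂₃, where the bracketed sum runs over the unordered pairs {i,j} ⊆ {1,2,3} with {k,l} = {1,2,3,4} \ {i,j} and the 1/2 accounts for the two orderings of (k,l) (each term c_{ijk}c_{ijl} being symmetric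 in k,l). -/
open Matrix

private lemma stmt18_detsub (M : Matrix (Fin 4) (Fin 4) ℝ) (S : Finset (Fin 4)) (k : ℕ)
    (h : S.card = k) (f : Fin k → Fin 4) (hfs : ∀ x, f x ∈ S) (hmono : StrictMono f) :
    (M.submatrix (fun i : {x // x ∈ S} => (i : Fin 4)) (fun i : {x // x ∈ S} => (i : Fin 4))).det
      = (M.submatrix f f).det := by
  rw [← Matrix.det_submatrix_equiv_self (S.orderIsoOfFin h).toEquiv, Matrix.submatrix_submatrix,
    Finset.orderEmbOfFin_unique h hfs hmono]
  rfl

private lemma stmt18_det4 (M : Matrix (Fin 4) (Fin 4) ℝ) : M.det =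
    M 0 0*M 1 1*M 2 2*M 3 3 - M 0 0*M 1 1*M 2 3*M 3 2 - M 0 0*M 1 2*M 2 1*M 3 3
    + M 0 0*M 1 2*M 2 3*M 3 1 + M 0 0*M 1 3*M 2 1*M 3 2 - M 0 0*M 1 3*M 2 2*M 3 1
    - M 0 1*M 1 0*M 2 2*M 3 3 + M 0 1*M 1 0*M 2 3*M 3 2 + M 0 1*M 1 2*M 2 0*M 3 3
    - M 0 1*M 1 2*M 2 3*M 3 0 - M 0 1*M 1 3*M 2 0*M 3 2 + M 0 1*M 1 3*M 2 2*M 3 0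
    + M 0 2*M 1 0*M 2 1*M 3 3 - M 0 2*M 1 0*M 2 3*M 3 1 - M 0 2*M 1 1*M 2 0*M 3 3
    + M 0 2*M 1 1*M 2 3*M 3 0 + M 0 2*M 1 3*M 2 0*M 3 1 - M 0 2*M 1 3*M 2 1*M 3 0
    - M 0 3*M 1 0*M 2 1*M 3 2 + M 0 3*M 1 0*M 2 2*M 3 1 + M 0 3*M 1 1*M 2 0*M 3 2
    - M 0 3*M 1 1*M 2 2*M 3 0 - M 0 3*M 1 2*M 2 0*M 3 1 + M 0 3*M 1 2*M 2 1*M 3 0 := by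
  have f1 : (Fin.succ 2 : Fin 4) = 3 := rfl
  have f2 : (Fin.castSucc 2 : Fin 4) = 2 := rfl
  have f3 : Fin.succAbove (1 : Fin 4) 2 = 3 := rfl
  have f4 : Fin.succAbove (2 : Fin 4) 2 = 3 := rfl
  have f5 : Fin.succAbove (3 : Fin 4) 2 = 2 := rfl
  rw [Matrix.det_succ_row_zero]
  simp [Fin.sum_univ_succ, Matrix.det_fin_three, f1, f2, f3, f4, f5]
  ring

/-- Determinant of a symmetric 4×4 real matrix in terms of its proper principal minors
(indices `0,1,2,3` standing for `1,2,3,4`). -/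
theorem stmt_18
    (M : Matrix (Fin 4) (Fin 4) ℝ) (hsymm : M.IsSymm)
    (A : Finset (Fin 4) → ℝ)
    (hA : ∀ S : Finset (Fin 4),
      A S = (M.submatrix (fun i : {x // x ∈ S} => (i : Fin 4))
                         (fun i : {x // x ∈ S} => (i : Fin 4))).det)
    (c : Fin 4 → Fin 4 → Fin 4 → ℝ)
    (hc : ∀ p q r : Fin 4, c p q r =
      A {p, q, r} - A {p} * A {q, r} - A {q} * A {p, r} - A {r} * A {p, q}
        + 2 * A {p} * A {q} * A {r})
    (h12 : A {0} * A {1} ≠ A {0, 1})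
    (h13 : A {0} * A {2} ≠ A {0, 2})
    (h23 : A {1} * A {2} ≠ A {1, 2}) :
    A {0, 1, 2, 3} =
      -(1 / 2) * (c 0 1 2 * c 0 1 3 / (A {0} * A {1} - A {0, 1})
        + c 0 1 2 * c 0 2 3 / (A {0} * A {2} - A {0, 2})
        + c 0 1 2 * c 1 2 3 / (A {1} * A {2} - A {1, 2}))
      + A {0} * c 1 2 3 + A {1} * c 0 2 3 + A {2} * c 0 1 3 + A {3} * c 0 1 2
      - 2 * A {0} * A {1} * A {2} * A {3}
      + A {0, 1} * A {2, 3} + A {0, 2} * A {1, 3} + A {0, 3} * A {1, 2} := by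
  have hs : ∀ i j, M j i = M i j := fun i j => hsymm.apply i j
  have s10 : M 1 0 = M 0 1 := hs 0 1
  have s20 : M 2 0 = M 0 2 := hs 0 2
  have s30 : M 3 0 = M 0 3 := hs 0 3
  have s21 : M 2 1 = M 1 2 := hs 1 2
  have s31 : M 3 1 = M 1 3 := hs 1 3
  have s32 : M 3 2 = M 2 3 := hs 2 3
  -- singletons
  have e0 : A {0} = M 0 0 := by
    rw [hA, stmt18_detsub M _ 1 (by decide) ![0] (by decide) (by decide)]
    rw [Matrix.det_fin_one]; simp
  have e1 : A {1} = M 1 1 := by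
    rw [hA, stmt18_detsub M _ 1 (by decide) ![1] (by decide) (by decide)]
    rw [Matrix.det_fin_one]; simp
  have e2 : A {2} = M 2 2 := by
    rw [hA, stmt18_detsub M _ 1 (by decide) ![2] (by decide) (by decide)]
    rw [Matrix.det_fin_one]; simp
  have e3 : A {3} = M 3 3 := by
    rw [hA, stmt18_detsub M _ 1 (by decide) ![3] (by decide) (by decide)]
    rw [Matrix.det_fin_one]; simp
  -- pairs
  have e01 : A {0, 1} = M 0 0 * M 1 1 - M 0 1 * M 0 1 := by
    rw [hA, stmt18_detsub M _ 2 (by decide) ![0, 1] (by decide) (by decide)]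
    rw [Matrix.det_fin_two]; simp [s10]
  have e02 : A {0, 2} = M 0 0 * M 2 2 - M 0 2 * M 0 2 := by
    rw [hA, stmt18_detsub M _ 2 (by decide) ![0, 2] (by decide) (by decide)]
    rw [Matrix.det_fin_two]; simp [s20]
  have e03 : A {0, 3} = M 0 0 * M 3 3 - M 0 3 * M 0 3 := by
    rw [hA, stmt18_detsub M _ 2 (by decide) ![0, 3] (by decide) (by decide)]
    rw [Matrix.det_fin_two]; simp [s30]
  have e12 : A {1, 2} = M 1 1 * M 2 2 - M 1 2 * M 1 2 := by
    rw [hA, stmt18_detsub M _ 2 (by decide) ![1, 2] (by decide) (by decide)]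
    rw [Matrix.det_fin_two]; simp [s21]
  have e13 : A {1, 3} = M 1 1 * M 3 3 - M 1 3 * M 1 3 := by
    rw [hA, stmt18_detsub M _ 2 (by decide) ![1, 3] (by decide) (by decide)]
    rw [Matrix.det_fin_two]; simp [s31]
  have e23 : A {2, 3} = M 2 2 * M 3 3 - M 2 3 * M 2 3 := by
    rw [hA, stmt18_detsub M _ 2 (by decide) ![2, 3] (by decide) (by decide)]
    rw [Matrix.det_fin_two]; simp [s32]
  -- triples
  have e012 : A {0, 1, 2} = M 0 0 * M 1 1 * M 2 2 + 2 * M 0 1 * M 0 2 * M 1 2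
      - M 0 0 * M 1 2 * M 1 2 - M 1 1 * M 0 2 * M 0 2 - M 2 2 * M 0 1 * M 0 1 := by
    rw [hA, stmt18_detsub M _ 3 (by decide) ![0, 1, 2] (by decide) (by decide)]
    rw [Matrix.det_fin_three]; simp [s10, s20, s21]
    ring
  have e013 : A {0, 1, 3} = M 0 0 * M 1 1 * M 3 3 + 2 * M 0 1 * M 0 3 * M 1 3
      - M 0 0 * M 1 3 * M 1 3 - M 1 1 * M 0 3 * M 0 3 - M 3 3 * M 0 1 * M 0 1 := by
    rw [hA, stmt18_detsub M _ 3 (by decide) ![0, 1, 3] (by decide) (by decide)]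
    rw [Matrix.det_fin_three]; simp [s10, s30, s31]
    ring
  have e023 : A {0, 2, 3} = M 0 0 * M 2 2 * M 3 3 + 2 * M 0 2 * M 0 3 * M 2 3
      - M 0 0 * M 2 3 * M 2 3 - M 2 2 * M 0 3 * M 0 3 - M 3 3 * M 0 2 * M 0 2 := by
    rw [hA, stmt18_detsub M _ 3 (by decide) ![0, 2, 3] (by decide) (by decide)]
    rw [Matrix.det_fin_three]; simp [s20, s30, s32]
    ring
  have e123 : A {1, 2, 3} = M 1 1 * M 2 2 * M 3 3 + 2 * M 1 2 * M 1 3 * M 2 3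
      - M 1 1 * M 2 3 * M 2 3 - M 2 2 * M 1 3 * M 1 3 - M 3 3 * M 1 2 * M 1 2 := by
    rw [hA, stmt18_detsub M _ 3 (by decide) ![1, 2, 3] (by decide) (by decide)]
    rw [Matrix.det_fin_three]; simp [s21, s31, s32]
    ring
  -- the full determinant
  have e0123 : A {0, 1, 2, 3} = M.det := by
    rw [hA, stmt18_detsub M _ 4 (by decide) id (by decide) (fun _ _ h => h),
      Matrix.submatrix_id_id]
  -- c values
  have c012 : c 0 1 2 = 2 * M 1 2 * M 0 2 * M 0 1 := by
    rw [hc, e012, e12, e02, e01, e0, e1, e2]; ring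
  have c013 : c 0 1 3 = 2 * M 1 3 * M 0 3 * M 0 1 := by
    rw [hc, e013, e13, e03, e01, e0, e1, e3]; ring
  have c023 : c 0 2 3 = 2 * M 2 3 * M 0 3 * M 0 2 := by
    rw [hc, e023, e23, e03, e02, e0, e2, e3]; ring
  have c123 : c 1 2 3 = 2 * M 2 3 * M 1 3 * M 1 2 := by
    rw [hc, e123, e23, e13, e12, e1, e2, e3]; ring
  -- denominators
  have d01 : A {0} * A {1} - A {0, 1} = M 0 1 ^ 2 := by rw [e0, e1, e01]; ring
  have d02 : A {0} * A {2} - A {0, 2} = M 0 2 ^ 2 := by rw [e0, e2, e02]; ring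
  have d12 : A {1} * A {2} - A {1, 2} = M 1 2 ^ 2 := by rw [e1, e2, e12]; ring
  have hm01 : M 0 1 ≠ 0 := by
    have : M 0 1 ^ 2 ≠ 0 := d01 ▸ sub_ne_zero.mpr h12
    exact pow_ne_zero_iff (by norm_num) |>.mp this
  have hm02 : M 0 2 ≠ 0 := by
    have : M 0 2 ^ 2 ≠ 0 := d02 ▸ sub_ne_zero.mpr h13
    exact pow_ne_zero_iff (by norm_num) |>.mp this
  have hm12 : M 1 2 ≠ 0 := by
    have : M 1 2 ^ 2 ≠ 0 := d12 ▸ sub_ne_zero.mpr h23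
    exact pow_ne_zero_iff (by norm_num) |>.mp this
  rw [e0123, stmt18_det4 M, s10, s20, s30, s21, s31, s32, c012, c013, c023, c123,
    d01, d02, d12, e0, e1, e2, e3, e01, e02, e03, e12, e13, e23]
  field_simp
  ring
end
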